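/- arXiv:1702.04485 — 16 statements merged into one kernel-verified Lean document; each statement's English description precedes it below -/
import Mathlib

section
/- Every partial isometry of a finite chain is either order-preserving or order-reversing: if α is a partial injective map on {1,...,n} with |xα − yα| = |x − y| for all x, y in its domain, then either (x ≤ y → xα ≤ yα for all x, y in the domain) or (x ≤ y → xα ≥ yα for all x, y in the domain). -/
/-- Partial maps on ℕ; `none` means undefined. -/
def PDom (α : ℕ → Option ℕ) : Set ℕ := {x | α x ≠ none}
def PImg (α : ℕ → Option ℕ) : Set ℕ := {y | ∃ x, α x = some y}
def PFix (α : ℕ → Option ℕ) : Set ℕ := {x | α x = some x}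

/-- `α` is a partial injective isometry of the chain {1,…,n}. -/
def PIso (n : ℕ) (α : ℕ → Option ℕ) : Prop :=
  (∀ x, α x ≠ none → x ∈ Set.Icc 1 n) ∧
  (∀ x y, α x = some y → y ∈ Set.Icc 1 n) ∧
  (∀ x y a, α x = some a → α y = some a → x = y) ∧
  (∀ x y a b, α x = some a → α y = some b →
    ((a : ℤ) - (b : ℤ)).natAbs = ((x : ℤ) - (y : ℤ)).natAbs)

/-- order-decreasing -/
def PDecr (α : ℕ → Option ℕ) : Prop := ∀ x a, α x = some a → a ≤ x

/-- order-preserving -/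
def POPres (α : ℕ → Option ℕ) : Prop :=
  ∀ x y a b, α x = some a → α y = some b → x ≤ y → a ≤ b

/-- order-reversing -/
def PORev (α : ℕ → Option ℕ) : Prop :=
  ∀ x y a b, α x = some a → α y = some b → x ≤ y → b ≤ a

/-- Every partial isometry of a finite chain is order-preserving or order-reversing. -/
theorem piso_pres_or_rev (n : ℕ) (α : ℕ → Option ℕ) (h : PIso n α) :
    POPres α ∨ PORev α := by
  obtain ⟨h1, h2, h3, h4⟩ := h
  by_contra hc
  simp only [POPres, PORev, not_or] at hc
  push_neg at hc
  obtain ⟨⟨x, y, a, b, hxa, hyb, hxy, hab⟩, ⟨u, v, c, d, huc, hvd, huv, hcd⟩⟩ := hc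
  have e1 := h4 x y a b hxa hyb
  have e2 := h4 u v c d huc hvd
  have e3 := h4 x u a c hxa huc
  have e4 := h4 x v a d hxa hvd
  have e5 := h4 y u b c hyb huc
  have e6 := h4 y v b d hyb hvd
  omega
end

section
/- If a partial isometry α of {1,...,n} has at least two fixed points, then α is a partial identity, i.e., xα = x for every x in the domain of α. -/
/-- A partial isometry with at least two fixed points is a partial identity. -/
theorem piso_two_fixed_partial_identity (n : ℕ) (α : ℕ → Option ℕ) (h : PIso n α)
    (i j : ℕ) (hij : i ≠ j) (hi : α i = some i) (hj : α j = some j) :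
    ∀ x a, α x = some a → a = x := by
  intro x a hx
  have h1 := h.2.2.2 x i a i hx hi
  have h2 := h.2.2.2 x j a j hx hj
  rw [Int.natAbs_eq_natAbs_iff] at h1 h2
  omega
end

section
/- If α is an order-preserving partial isometry of {1,...,n} with at least one fixed point, then α is a partial identity. -/
/-- An order-preserving partial isometry with a fixed point is a partial identity. -/
theorem piso_pres_fixed_partial_identity (n : ℕ) (α : ℕ → Option ℕ)
    (h : PIso n α) (hp : POPres α) (i : ℕ) (hi : α i = some i) :
    ∀ x a, α x = some a → a = x := by
  intro x a hx
  obtain ⟨_, _, _, hiso⟩ := h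
  have hd := hiso x i a i hx hi
  rcases le_total x i with hxi | hxi
  · have hai : a ≤ i := hp x i a i hx hi hxi
    omega
  · have hia : i ≤ a := hp i x i a hi hx hxi
    omega
end

section
/- An order-preserving partial isometry of {1,...,n} is either strictly decreasing on its domain (xα < x for all x ∈ Dom α), or strictly increasing on its domain (xα > x for all x ∈ Dom α), or a partial identity. -/
/-- An order-preserving partial isometry is strictly decreasing, strictly increasing,
or a partial identity. -/
theorem piso_pres_trichotomy (n : ℕ) (α : ℕ → Option ℕ)
    (h : PIso n α) (hp : POPres α) :
    (∀ x a, α x = some a → a < x) ∨ (∀ x a, α x = some a → x < a) ∨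
    (∀ x a, α x = some a → a = x) := by
  obtain ⟨-, -, -, hiso⟩ := h
  by_cases hne : ∃ x a, α x = some a
  · obtain ⟨x0, a0, h0⟩ := hne
    have key : ∀ x a, α x = some a → (a : ℤ) - x = (a0 : ℤ) - x0 := by
      intro x a hx
      rcases le_total x x0 with hle | hle
      · have h1 : a ≤ a0 := hp x x0 a a0 hx h0 hle
        have h2 := hiso x x0 a a0 hx h0
        omega
      · have h1 : a0 ≤ a := hp x0 x a0 a h0 hx hle
        have h2 := hiso x x0 a a0 hx h0
        omega
    rcases lt_trichotomy a0 x0 with hc | hc | hc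
    · left; intro x a hx; have := key x a hx; omega
    · right; right; intro x a hx; have := key x a hx; omega
    · right; left; intro x a hx; have := key x a hx; omega
  · right; right; intro x a hx
    exact absurd ⟨x, a, hx⟩ hne
end

section
/- If α is a partial isometry of {1,...,n} whose set of fixed points is exactly {i}, then x + xα = 2i for every x in the domain of α. -/
/-- If the fixed-point set of a partial isometry is exactly {i}, then x + xα = 2i
for all x in the domain. -/
theorem piso_unique_fixed_sum (n : ℕ) (α : ℕ → Option ℕ) (h : PIso n α)
    (i : ℕ) (hF : PFix α = {i}) :
    ∀ x a, α x = some a → x + a = 2 * i := by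
  intro x a hx
  have hi : α i = some i := by
    have : i ∈ PFix α := by rw [hF]; rfl
    exact this
  have hiso := h.2.2.2 x i a i hx hi
  have hcase : a = x ∨ a + x = 2 * i := by omega
  rcases hcase with hax | hsum
  · subst hax
    have : a ∈ PFix α := hx
    rw [hF] at this
    simp at this
    omega
  · omega
end

section
/- If α is an order-decreasing partial isometry of {1,...,n} whose set of fixed points is exactly {i}, then the domain of α is contained in {i, i+1, ..., n}. -/
/-- If α is an order-decreasing partial isometry with fixed-point set exactly {i},
then Dom α ⊆ {i, i+1, …, n}. -/
theorem piso_decr_unique_fixed_dom (n : ℕ) (α : ℕ → Option ℕ)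
    (h : PIso n α) (hd : PDecr α) (i : ℕ) (hF : PFix α = {i}) :
    PDom α ⊆ Set.Icc i n := by
  obtain ⟨h1, h2, h3, h4⟩ := h
  intro x hx
  obtain ⟨a, ha⟩ := Option.ne_none_iff_exists'.mp hx
  have hxn := h1 x hx
  have hfi : α i = some i := by
    have : i ∈ PFix α := by rw [hF]; rfl
    exact this
  have hax : a ≤ x := hd x a ha
  have hiso := h4 x i a i ha hfi
  constructor
  · by_contra hlt
    push_neg at hlt
    -- x < i, a ≤ x, isometry gives i - a = i - x hence a = x
    have : ((a:ℤ) - i).natAbs = ((x:ℤ) - i).natAbs := hiso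
    rw [Int.natAbs_eq_natAbs_iff] at this
    have hax2 : a = x := by rcases this with h5 | h5 <;> omega
    have : x ∈ PFix α := by rw [← hax2] at ha ⊢; exact ha
    rw [hF, Set.mem_singleton_iff] at this
    omega
  · exact hxn.2
end

section
/- The total number of order-preserving, order-decreasing partial isometries of {1,...,n} (including the empty map) is 2^{n+1} − (n+1). -/
/- ## Auxiliary development -/

/-- The map with domain `D` shifting down by `k`. -/
def OddpMk (D : Finset ℕ) (k : ℕ) : ℕ → Option ℕ :=
  fun x => if x ∈ D then some (x - k) else none

lemma oddpMk_eq_some {D : Finset ℕ} {k x y : ℕ} :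
    OddpMk D k x = some y ↔ x ∈ D ∧ y = x - k := by
  unfold OddpMk
  by_cases hx : x ∈ D <;> simp [hx, eq_comm]

lemma oddpMk_prop {n : ℕ} {D : Finset ℕ} {k : ℕ}
    (hD : D ⊆ Finset.Icc 1 n) (hk : ∀ x ∈ D, k < x) :
    PIso n (OddpMk D k) ∧ PDecr (OddpMk D k) ∧ POPres (OddpMk D k) := by
  refine ⟨⟨?_, ?_, ?_, ?_⟩, ?_, ?_⟩
  · intro x hx
    by_cases h : x ∈ D
    · have := Finset.mem_Icc.mp (hD h); exact Set.mem_Icc.mpr this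
    · simp [OddpMk, h] at hx
  · intro x y h
    obtain ⟨hx, rfl⟩ := oddpMk_eq_some.mp h
    have h1 := Finset.mem_Icc.mp (hD hx)
    have h2 := hk x hx
    simp only [Set.mem_Icc]; omega
  · intro x y a hx hy
    obtain ⟨hx1, hx2⟩ := oddpMk_eq_some.mp hx
    obtain ⟨hy1, hy2⟩ := oddpMk_eq_some.mp hy
    have := hk x hx1; have := hk y hy1; omega
  · intro x y a b hx hy
    obtain ⟨hx1, hx2⟩ := oddpMk_eq_some.mp hx
    obtain ⟨hy1, hy2⟩ := oddpMk_eq_some.mp hy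
    have := hk x hx1; have := hk y hy1; omega
  · intro x a hx
    obtain ⟨hx1, hx2⟩ := oddpMk_eq_some.mp hx
    omega
  · intro x y a b hx hy hxy
    obtain ⟨hx1, hx2⟩ := oddpMk_eq_some.mp hx
    obtain ⟨hy1, hy2⟩ := oddpMk_eq_some.mp hy
    omega

lemma oddp_empty_prop (n : ℕ) :
    PIso n (fun _ => none) ∧ PDecr (fun _ => none) ∧ POPres (fun _ => none) := by
  have h : (fun _ : ℕ => (none : Option ℕ)) = OddpMk ∅ 0 := by
    funext x; simp [OddpMk]
  rw [h]
  exact oddpMk_prop (by simp) (by simp)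

/-- Structure lemma: every element of ODDP_n is either empty or a shift on a finite domain. -/
lemma oddp_struct {n : ℕ} {α : ℕ → Option ℕ}
    (h : PIso n α ∧ PDecr α ∧ POPres α) :
    α = (fun _ => none) ∨
      ∃ D k, D.Nonempty ∧ D ⊆ Finset.Icc 1 n ∧ (∀ x ∈ D, k < x) ∧ α = OddpMk D k := by
  classical
  obtain ⟨⟨hdom, himg, _, hiso⟩, hdec, hop⟩ := h
  by_cases hE : ∀ x, α x = none
  · left; funext x; exact hE x
  right
  push_neg at hE
  obtain ⟨x₀, hx₀⟩ := hE
  obtain ⟨a₀, ha₀⟩ : ∃ a, α x₀ = some a := Option.ne_none_iff_exists'.mp hx₀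
  set k := x₀ - a₀ with hkdef
  set D : Finset ℕ := (Finset.Icc 1 n).filter (fun x => α x ≠ none) with hDdef
  have hmemD : ∀ x, x ∈ D ↔ α x ≠ none := by
    intro x
    simp only [hDdef, Finset.mem_filter, Finset.mem_Icc, and_iff_right_iff_imp]
    intro hx
    have := hdom x hx
    simpa [Set.mem_Icc] using this
  have claim : ∀ x a, α x = some a → a = x - k ∧ k < x := by
    intro x a hx
    have hle : a ≤ x := hdec x a hx
    have hle₀ : a₀ ≤ x₀ := hdec x₀ a₀ ha₀
    have h1 : 1 ≤ a ∧ a ≤ n := Set.mem_Icc.mp (himg x a hx)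
    have h1₀ : 1 ≤ a₀ ∧ a₀ ≤ n := Set.mem_Icc.mp (himg x₀ a₀ ha₀)
    have hnat := hiso x x₀ a a₀ hx ha₀
    rcases le_total x x₀ with hc | hc
    · have := hop x x₀ a a₀ hx ha₀ hc; omega
    · have := hop x₀ x a₀ a ha₀ hx hc; omega
  refine ⟨D, k, ⟨x₀, (hmemD x₀).mpr hx₀⟩, ?_, ?_, ?_⟩
  · intro x hx
    have := hdom x ((hmemD x).mp hx)
    simpa [Finset.mem_Icc, Set.mem_Icc] using this
  · intro x hx
    obtain ⟨a, ha⟩ : ∃ a, α x = some a := Option.ne_none_iff_exists'.mp ((hmemD x).mp hx)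
    exact (claim x a ha).2
  · funext x
    by_cases hx : α x = none
    · have : x ∉ D := fun h => ((hmemD x).mp h) hx
      simp [OddpMk, this, hx]
    · obtain ⟨a, ha⟩ : ∃ a, α x = some a := Option.ne_none_iff_exists'.mp hx
      have hxD : x ∈ D := (hmemD x).mpr hx
      obtain ⟨h1, _⟩ := claim x a ha
      simp [OddpMk, hxD, ha, h1]

/-- The encoding of a non-singleton subset of `{0,…,n}` as an element of ODDP_n. -/
noncomputable def OddpG (n : ℕ)
    (S : {S : Finset ℕ // S ⊆ Finset.range (n + 1) ∧ S.card ≠ 1}) :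
    {α : ℕ → Option ℕ // PIso n α ∧ PDecr α ∧ POPres α} := by
  classical
  refine if h : S.1.Nonempty then
    ⟨OddpMk (S.1.erase (S.1.min' h)) (S.1.min' h), oddpMk_prop ?_ ?_⟩
  else ⟨fun _ => none, oddp_empty_prop n⟩
  · intro x hx
    obtain ⟨hne, hxS⟩ := Finset.mem_erase.mp hx
    have h1 : x < n + 1 := Finset.mem_range.mp (S.2.1 hxS)
    have h2 := S.1.min'_le x hxS
    rw [Finset.mem_Icc]; omega
  · intro x hx
    obtain ⟨hne, hxS⟩ := Finset.mem_erase.mp hx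
    have h2 := S.1.min'_le x hxS
    omega

lemma oddpG_bij (n : ℕ) : Function.Bijective (OddpG n) := by
  classical
  constructor
  · rintro ⟨S₁, hS₁⟩ ⟨S₂, hS₂⟩ h
    have hval : (OddpG n ⟨S₁, hS₁⟩).1 = (OddpG n ⟨S₂, hS₂⟩).1 := by rw [h]
    have key : ∀ (S : Finset ℕ) (hS : S ⊆ Finset.range (n+1) ∧ S.card ≠ 1) (h : S.Nonempty),
        (OddpG n ⟨S, hS⟩).1 = OddpMk (S.erase (S.min' h)) (S.min' h) := by
      intro S hS h
      simp only [OddpG, dif_pos h]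
    have keyE : ∀ (S : Finset ℕ) (hS : S ⊆ Finset.range (n+1) ∧ S.card ≠ 1) (h : ¬ S.Nonempty),
        (OddpG n ⟨S, hS⟩).1 = fun _ => none := by
      intro S hS h
      simp only [OddpG, dif_neg h]
    -- nonempty sets have at least two elements, hence nonempty erased min
    have htwo : ∀ (S : Finset ℕ), S ⊆ Finset.range (n+1) → S.card ≠ 1 → (h : S.Nonempty) →
        (S.erase (S.min' h)).Nonempty := by
      intro S _ hcard h
      have h1 : 1 ≤ S.card := Finset.card_pos.mpr h
      have h2 : (S.erase (S.min' h)).card = S.card - 1 :=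
        Finset.card_erase_of_mem (S.min'_mem h)
      rw [← Finset.card_pos, h2]; omega
    by_cases h₁ : S₁.Nonempty <;> by_cases h₂ : S₂.Nonempty
    · rw [key S₁ hS₁ h₁, key S₂ hS₂ h₂] at hval
      set m₁ := S₁.min' h₁
      set m₂ := S₂.min' h₂
      have hDeq : S₁.erase m₁ = S₂.erase m₂ := by
        ext x
        constructor <;> intro hx
        · by_contra hx2
          have : OddpMk (S₁.erase m₁) m₁ x = some (x - m₁) := oddpMk_eq_some.mpr ⟨hx, rfl⟩
          rw [hval] at this
          exact hx2 (oddpMk_eq_some.mp this).1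
        · by_contra hx2
          have : OddpMk (S₂.erase m₂) m₂ x = some (x - m₂) := oddpMk_eq_some.mpr ⟨hx, rfl⟩
          rw [← hval] at this
          exact hx2 (oddpMk_eq_some.mp this).1
      obtain ⟨x, hx⟩ := htwo S₁ hS₁.1 hS₁.2 h₁
      have hx' : x ∈ S₂.erase m₂ := hDeq ▸ hx
      have e1 : OddpMk (S₁.erase m₁) m₁ x = some (x - m₁) := oddpMk_eq_some.mpr ⟨hx, rfl⟩
      rw [hval] at e1
      have e2 := (oddpMk_eq_some.mp e1).2
      have l1 : m₁ < x := by
        have := S₁.min'_le x (Finset.mem_erase.mp hx).2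
        have := (Finset.mem_erase.mp hx).1
        omega
      have l2 : m₂ < x := by
        have := S₂.min'_le x (Finset.mem_erase.mp hx').2
        have := (Finset.mem_erase.mp hx').1
        omega
      have hm : m₁ = m₂ := by omega
      apply Subtype.ext
      calc S₁ = insert m₁ (S₁.erase m₁) := (Finset.insert_erase (S₁.min'_mem h₁)).symm
        _ = insert m₂ (S₂.erase m₂) := by rw [hDeq, hm]
        _ = S₂ := Finset.insert_erase (S₂.min'_mem h₂)
    · exfalso
      rw [key S₁ hS₁ h₁, keyE S₂ hS₂ h₂] at hval
      obtain ⟨x, hx⟩ := htwo S₁ hS₁.1 hS₁.2 h₁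
      have : OddpMk (S₁.erase (S₁.min' h₁)) (S₁.min' h₁) x = some (x - S₁.min' h₁) :=
        oddpMk_eq_some.mpr ⟨hx, rfl⟩
      rw [hval] at this
      simp at this
    · exfalso
      rw [keyE S₁ hS₁ h₁, key S₂ hS₂ h₂] at hval
      obtain ⟨x, hx⟩ := htwo S₂ hS₂.1 hS₂.2 h₂
      have : OddpMk (S₂.erase (S₂.min' h₂)) (S₂.min' h₂) x = some (x - S₂.min' h₂) :=
        oddpMk_eq_some.mpr ⟨hx, rfl⟩
      rw [← hval] at this
      simp at this
    · apply Subtype.ext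
      rw [Finset.not_nonempty_iff_eq_empty] at h₁ h₂
      show S₁ = S₂
      rw [h₁, h₂]
  · rintro ⟨α, hα⟩
    rcases oddp_struct hα with hE | ⟨D, k, hne, hsub, hlt, rfl⟩
    · refine ⟨⟨∅, by simp⟩, ?_⟩
      apply Subtype.ext
      simp only [OddpG, dif_neg (Finset.not_nonempty_empty)]
      exact hE.symm
    · have hkD : k ∉ D := fun h => lt_irrefl k (hlt k h)
      have hS1 : insert k D ⊆ Finset.range (n + 1) := by
        intro x hx
        rcases Finset.mem_insert.mp hx with rfl | hx
        · obtain ⟨y, hy⟩ := hne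
          have := hlt y hy
          have := Finset.mem_Icc.mp (hsub hy)
          rw [Finset.mem_range]; omega
        · have := Finset.mem_Icc.mp (hsub hx)
          rw [Finset.mem_range]; omega
      have hS2 : (insert k D).card ≠ 1 := by
        rw [Finset.card_insert_of_notMem hkD]
        have := Finset.card_pos.mpr hne
        omega
      refine ⟨⟨insert k D, hS1, hS2⟩, ?_⟩
      have hne' : (insert k D).Nonempty := ⟨k, Finset.mem_insert_self k D⟩
      have hmin : (insert k D).min' hne' = k := by
        apply le_antisymm
        · exact Finset.min'_le _ k (Finset.mem_insert_self k D)
        · have := (insert k D).min'_mem hne'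
          rcases Finset.mem_insert.mp this with h | h
          · omega
          · exact (hlt _ h).le
      apply Subtype.ext
      simp only [OddpG, dif_pos hne', hmin, Finset.erase_insert hkD]

/-- The order of ODDP_n is 2^(n+1) − (n+1). -/
theorem oddp_order (n : ℕ) :
    Nat.card {α : ℕ → Option ℕ // PIso n α ∧ PDecr α ∧ POPres α} =
    2 ^ (n + 1) - (n + 1) := by
  classical
  rw [← Nat.card_eq_of_bijective (OddpG n) (oddpG_bij n)]
  have e : {S : Finset ℕ // S ⊆ Finset.range (n + 1) ∧ S.card ≠ 1} ≃
      {S // S ∈ (Finset.range (n + 1)).powerset.filter (fun S => S.card ≠ 1)} :=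
    Equiv.subtypeEquivRight (by intro S; simp [Finset.mem_powerset, Finset.mem_filter])
  rw [Nat.card_congr e, Nat.card_eq_fintype_card, Fintype.card_coe]
  have h1 : (Finset.range (n + 1)).powerset.filter (fun S => S.card ≠ 1) =
      (Finset.range (n + 1)).powerset \
        ((Finset.range (n + 1)).powerset.filter (fun S => S.card = 1)) := by
    rw [← Finset.filter_not]
  rw [h1, Finset.card_sdiff_of_subset (Finset.filter_subset _ _),
    ← Finset.powersetCard_eq_filter, Finset.card_powersetCard, Finset.card_powerset,
    Finset.card_range, Nat.choose_one_right]
end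

section
/- For n ≥ m ≥ 1, the number of order-preserving, order-decreasing partial isometries of {1,...,n} with exactly m fixed points equals C(n, m). -/
def partialId (S : Finset ℕ) : ℕ → Option ℕ := fun x => if x ∈ S then some x else none

lemma partialId_eq_some {S : Finset ℕ} {x a : ℕ} : partialId S x = some a ↔ x ∈ S ∧ a = x := by
  by_cases hx : x ∈ S <;> simp [partialId, hx, eq_comm]

lemma pFix_partialId (S : Finset ℕ) : PFix (partialId S) = S := by
  ext x
  simp [PFix, partialId_eq_some]

lemma partialId_injective : Function.Injective partialId := fun S T h =>
  Finset.coe_injective (by rw [← pFix_partialId S, h, pFix_partialId])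

lemma pIso_partialId {n : ℕ} {S : Finset ℕ} (hS : S ⊆ Finset.Icc 1 n) :
    PIso n (partialId S) := by
  have hIcc : ∀ x ∈ S, x ∈ Set.Icc 1 n := fun x hx => by simpa using hS hx
  refine ⟨fun x hx => ?_, fun x a h => ?_, fun x y a hx hy => ?_, fun x y a b hx hy => ?_⟩
  · obtain ⟨a, ha⟩ := Option.ne_none_iff_exists'.mp hx
    exact hIcc x (partialId_eq_some.mp ha).1
  · obtain ⟨hx, rfl⟩ := partialId_eq_some.mp h
    exact hIcc a hx
  · rw [(partialId_eq_some.mp hx).2.symm, (partialId_eq_some.mp hy).2]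
  · rw [(partialId_eq_some.mp hx).2, (partialId_eq_some.mp hy).2]

lemma pDecr_partialId (S : Finset ℕ) : PDecr (partialId S) :=
  fun _ _ h => (partialId_eq_some.mp h).2.le

lemma pOPres_partialId (S : Finset ℕ) : POPres (partialId S) := fun _ _ _ _ hx hy hxy => by
  rwa [(partialId_eq_some.mp hx).2, (partialId_eq_some.mp hy).2]

lemma PIso.pFix_subset_Icc {n : ℕ} {α : ℕ → Option ℕ} (hiso : PIso n α) :
    PFix α ⊆ Set.Icc 1 n :=
  fun x hx => hiso.1 x (by simp [show α x = some x from hx])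

lemma PIso.eq_self_of_mem_pFix {n : ℕ} {α : ℕ → Option ℕ} (hiso : PIso n α) (hp : POPres α)
    {f x a : ℕ} (hf : f ∈ PFix α) (hx : α x = some a) : a = x := by
  have hdist := hiso.2.2.2 x f a f hx hf
  rcases le_total x f with h | h
  · have := hp x f a f hx hf h
    omega
  · have := hp f x f a hf hx h
    omega

lemma eq_partialId_of_forall_eq_self {α : ℕ → Option ℕ} {S : Finset ℕ}
    (h : ∀ x a, α x = some a → a = x) (hS : ↑S = PFix α) : α = partialId S := by
  funext x
  have hmem : x ∈ S ↔ α x = some x := Set.ext_iff.mp hS x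
  cases hx : α x with
  | none => simp [partialId, hmem, hx]
  | some a =>
    obtain rfl : a = x := h x a hx
    simp [partialId, hmem, hx]

lemma PIso.exists_eq_partialId {n : ℕ} {α : ℕ → Option ℕ} (hiso : PIso n α) (hp : POPres α)
    (hne : (PFix α).Nonempty) :
    ∃ S : Finset ℕ, S ⊆ Finset.Icc 1 n ∧ ↑S = PFix α ∧ α = partialId S := by
  obtain ⟨f, hf⟩ := hne
  obtain ⟨S, hS⟩ := ((Set.finite_Icc 1 n).subset hiso.pFix_subset_Icc).exists_finset_coe
  refine ⟨S, ?_, hS, eq_partialId_of_forall_eq_self (fun _ _ => hiso.eq_self_of_mem_pFix hp hf) hS⟩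
  rw [← Finset.coe_subset, hS, Finset.coe_Icc]
  exact hiso.pFix_subset_Icc

lemma setOf_pFix_ncard_eq_image_partialId (n : ℕ) {m : ℕ} (hm : 1 ≤ m) :
    {α | PIso n α ∧ PDecr α ∧ POPres α ∧ (PFix α).ncard = m} =
      partialId '' ↑((Finset.Icc 1 n).powersetCard m) := by
  ext α
  simp only [Set.mem_ofPred_eq, Set.mem_image, Finset.mem_coe, Finset.mem_powersetCard]
  constructor
  · rintro ⟨hiso, -, hp, hcard⟩
    obtain ⟨S, hSn, hS, rfl⟩ :=
      hiso.exists_eq_partialId hp (Set.nonempty_of_ncard_ne_zero (by omega))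
    exact ⟨S, ⟨hSn, by rw [← hcard, ← hS, Set.ncard_coe_finset]⟩, rfl⟩
  · rintro ⟨S, ⟨hSn, rfl⟩, rfl⟩
    exact ⟨pIso_partialId hSn, pDecr_partialId S, pOPres_partialId S,
      by rw [pFix_partialId, Set.ncard_coe_finset]⟩

theorem oddp_fix_count_general (n m : ℕ) (hm : 1 ≤ m) :
    Nat.card {α : ℕ → Option ℕ //
      PIso n α ∧ PDecr α ∧ POPres α ∧ (PFix α).ncard = m} =
    Nat.choose n m := by
  calc Nat.card {α : ℕ → Option ℕ // PIso n α ∧ PDecr α ∧ POPres α ∧ (PFix α).ncard = m}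
      = (partialId '' ↑((Finset.Icc 1 n).powersetCard m)).ncard := by
        rw [← setOf_pFix_ncard_eq_image_partialId n hm]; rfl
    _ = n.choose m := by
      rw [Set.ncard_image_of_injective _ partialId_injective, Set.ncard_coe_finset,
        Finset.card_powersetCard, Nat.card_Icc, Nat.add_sub_cancel]

/-- The number of elements of ODDP_n with exactly m fixed points (n ≥ m ≥ 1)
is C(n, m). -/
theorem oddp_fix_count (n m : ℕ) (hm : 1 ≤ m) (hmn : m ≤ n) :
    Nat.card {α : ℕ → Option ℕ //
      PIso n α ∧ PDecr α ∧ POPres α ∧ (PFix α).ncard = m} =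
    Nat.choose n m :=
  oddp_fix_count_general n m hm
end

section
/- The number of order-preserving, order-decreasing partial isometries of {1,...,n} with no fixed points equals the total number of order-preserving, order-decreasing partial isometries of {1,...,n−1}, i.e., equals 2^n − n. -/
namespace OddpAux

/-- Bundled property: element of ODDP_n whose shift is at least `d₀`. -/
def Q (d₀ n : ℕ) (α : ℕ → Option ℕ) : Prop :=
  PIso n α ∧ PDecr α ∧ POPres α ∧ ∀ x a, α x = some a → a + d₀ ≤ x

/-- The partial map encoded by a finset `S`: its minimum is the shift,
the rest of `S` is the domain. -/
noncomputable def Fof (S : Finset ℕ) : ℕ → Option ℕ :=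
  fun x => if x ∈ S ∧ sInf (↑S : Set ℕ) < x then some (x - sInf (↑S : Set ℕ)) else none

lemma Fof_some {S : Finset ℕ} {x a : ℕ} :
    Fof S x = some a ↔ (x ∈ S ∧ sInf (↑S : Set ℕ) < x ∧ a = x - sInf (↑S : Set ℕ)) := by
  unfold Fof
  split_ifs with h
  · simp only [Option.some.injEq]
    constructor
    · rintro rfl; exact ⟨h.1, h.2, rfl⟩
    · rintro ⟨_, _, rfl⟩; rfl
  · simp only [false_iff]
    rintro ⟨h1, h2, _⟩
    exact (h ⟨h1, h2⟩).elim

lemma Fof_eq_none {S : Finset ℕ} {x : ℕ} :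
    Fof S x = none ↔ ¬(x ∈ S ∧ sInf (↑S : Set ℕ) < x) := by
  unfold Fof
  split_ifs with h <;> simp [h]

lemma shift_eq {n : ℕ} {α : ℕ → Option ℕ} (h : PIso n α) (hp : POPres α)
    {x y a b : ℕ} (hx : α x = some a) (hy : α y = some b) :
    (x : ℤ) - a = (y : ℤ) - b := by
  have hiso := h.2.2.2 x y a b hx hy
  rcases le_total x y with hle | hle
  · have := hp x y a b hx hy hle; omega
  · have := hp y x b a hy hx hle; omega

lemma Q_Fof {d₀ n : ℕ} {S : Finset ℕ} (hsub : S ⊆ Finset.Icc d₀ n) :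
    Q d₀ n (Fof S) := by
  set m := sInf (↑S : Set ℕ) with hm
  have hfact : ∀ x a, Fof S x = some a →
      x ∈ S ∧ m < x ∧ a = x - m ∧ d₀ ≤ m ∧ x ≤ n := by
    intro x a hxa
    obtain ⟨hxS, hlt, ha⟩ := Fof_some.mp hxa
    have hx' := Finset.mem_Icc.mp (hsub hxS)
    have hmS : m ∈ S := by
      have : (↑S : Set ℕ).Nonempty := ⟨x, by exact_mod_cast hxS⟩
      exact_mod_cast Nat.sInf_mem this
    have hm' := Finset.mem_Icc.mp (hsub hmS)
    exact ⟨hxS, hlt, ha, hm'.1, hx'.2⟩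
  refine ⟨⟨?_, ?_, ?_, ?_⟩, ?_, ?_, ?_⟩
  · intro x hx
    obtain ⟨a, ha⟩ := Option.ne_none_iff_exists'.mp hx
    obtain ⟨_, h2, _, _, h5⟩ := hfact x a ha
    exact Set.mem_Icc.mpr ⟨by omega, h5⟩
  · intro x a ha
    obtain ⟨_, h2, h3, _, h5⟩ := hfact x a ha
    exact Set.mem_Icc.mpr ⟨by omega, by omega⟩
  · intro x y a hx hy
    obtain ⟨_, h2, h3, _, _⟩ := hfact x a hx
    obtain ⟨_, h2', h3', _, _⟩ := hfact y a hy
    omega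
  · intro x y a b hx hy
    obtain ⟨_, h2, h3, _, _⟩ := hfact x a hx
    obtain ⟨_, h2', h3', _, _⟩ := hfact y b hy
    omega
  · intro x a hx
    obtain ⟨_, h2, h3, _, _⟩ := hfact x a hx
    omega
  · intro x y a b hx hy hxy
    obtain ⟨_, h2, h3, _, _⟩ := hfact x a hx
    obtain ⟨_, h2', h3', _, _⟩ := hfact y b hy
    omega
  · intro x a hx
    obtain ⟨_, h2, h3, h4, _⟩ := hfact x a hx
    omega

lemma exists_gt_min {S : Finset ℕ} (hS : S.Nonempty) (hc : S.card ≠ 1) :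
    ∃ x ∈ S, sInf (↑S : Set ℕ) < x := by
  have h1 : 1 < S.card := lt_of_le_of_ne (Finset.one_le_card.mpr hS) (Ne.symm hc)
  obtain ⟨a, ha, b, hb, hab⟩ := Finset.one_lt_card.mp h1
  rcases eq_or_ne a (sInf (↑S : Set ℕ)) with h | h
  · refine ⟨b, hb, lt_of_le_of_ne (Nat.sInf_le (by exact_mod_cast hb)) ?_⟩
    omega
  · exact ⟨a, ha, lt_of_le_of_ne (Nat.sInf_le (by exact_mod_cast ha)) (Ne.symm h)⟩

lemma mem_of_Fof_eq {S T : Finset ℕ} (h : Fof S = Fof T)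
    (hmin : sInf (↑S : Set ℕ) = sInf (↑T : Set ℕ))
    (hT : T.Nonempty) : ∀ z ∈ S, z ∈ T := by
  intro z hz
  rcases eq_or_ne z (sInf (↑S : Set ℕ)) with rfl | hne
  · rw [hmin]
    exact_mod_cast Nat.sInf_mem (by exact_mod_cast hT : (↑T : Set ℕ).Nonempty)
  · have hlt : sInf (↑S : Set ℕ) < z :=
      lt_of_le_of_ne (Nat.sInf_le (by exact_mod_cast hz)) (Ne.symm hne)
    have : Fof S z = some (z - sInf (↑S : Set ℕ)) := Fof_some.mpr ⟨hz, hlt, rfl⟩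
    rw [h] at this
    exact (Fof_some.mp this).1

lemma main (d₀ n : ℕ) :
    Nat.card {α : ℕ → Option ℕ // Q d₀ n α} =
      2 ^ (Finset.Icc d₀ n).card - (Finset.Icc d₀ n).card := by
  classical
  set t := (Finset.Icc d₀ n).powerset.filter (fun S => S.card ≠ 1) with ht
  have hmem : ∀ S : Finset ℕ, S ∈ t ↔ S ⊆ Finset.Icc d₀ n ∧ S.card ≠ 1 := by
    intro S
    simp [ht, Finset.mem_filter, Finset.mem_powerset]
  have hbij : Function.Bijective
      (fun S : {S // S ∈ t} =>
        (⟨Fof S.1, Q_Fof ((hmem S.1).mp S.2).1⟩ : {α // Q d₀ n α})) := by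
    constructor
    · rintro ⟨S, hS⟩ ⟨T, hT⟩ h
      simp only [Subtype.mk.injEq] at h ⊢
      obtain ⟨hS1, hS2⟩ := (hmem S).mp hS
      obtain ⟨hT1, hT2⟩ := (hmem T).mp hT
      rcases S.eq_empty_or_nonempty with rfl | hSne
      · rcases T.eq_empty_or_nonempty with rfl | hTne
        · rfl
        · obtain ⟨x, hx, hlt⟩ := exists_gt_min hTne hT2
          have h1 : Fof T x = some (x - sInf (↑T : Set ℕ)) := Fof_some.mpr ⟨hx, hlt, rfl⟩
          rw [← h] at h1
          obtain ⟨h2, _, _⟩ := Fof_some.mp h1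
          simp at h2
      · rcases T.eq_empty_or_nonempty with rfl | hTne
        · obtain ⟨x, hx, hlt⟩ := exists_gt_min hSne hS2
          have h1 : Fof S x = some (x - sInf (↑S : Set ℕ)) := Fof_some.mpr ⟨hx, hlt, rfl⟩
          rw [h] at h1
          obtain ⟨h2, _, _⟩ := Fof_some.mp h1
          simp at h2
        · obtain ⟨x, hx, hlt⟩ := exists_gt_min hSne hS2
          have h1 : Fof S x = some (x - sInf (↑S : Set ℕ)) := Fof_some.mpr ⟨hx, hlt, rfl⟩
          rw [h] at h1
          obtain ⟨hxT, hlt', heq⟩ := Fof_some.mp h1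
          have hle : sInf (↑S : Set ℕ) ≤ x := le_of_lt hlt
          have hle' : sInf (↑T : Set ℕ) ≤ x := le_of_lt hlt'
          have hmin : sInf (↑S : Set ℕ) = sInf (↑T : Set ℕ) := by omega
          apply Finset.Subset.antisymm
          · exact fun z hz => mem_of_Fof_eq h hmin hTne z hz
          · exact fun z hz => mem_of_Fof_eq h.symm hmin.symm hSne z hz
    · rintro ⟨α, hα⟩
      by_cases he : ∀ x, α x = none
      · refine ⟨⟨∅, (hmem ∅).mpr ⟨Finset.empty_subset _, by simp⟩⟩, ?_⟩
        apply Subtype.ext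
        funext x
        simp only [he x]
        exact Fof_eq_none.mpr (by simp)
      · push_neg at he
        obtain ⟨x₀, hx₀⟩ := he
        obtain ⟨a₀, ha₀⟩ := Option.ne_none_iff_exists'.mp hx₀
        have hd₀ : a₀ + d₀ ≤ x₀ := hα.2.2.2 x₀ a₀ ha₀
        have himg₀ := Set.mem_Icc.mp (hα.1.2.1 x₀ a₀ ha₀)
        have hdom₀ := Set.mem_Icc.mp (hα.1.1 x₀ (by simp [ha₀]))
        set m := x₀ - a₀ with hmdef
        have key : ∀ x a, α x = some a → a = x - m ∧ m < x := by
          intro x a hxa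
          have hsh := shift_eq hα.1 hα.2.2.1 hxa ha₀
          have himg := Set.mem_Icc.mp (hα.1.2.1 x a hxa)
          omega
        set D := (Finset.Icc 1 n).filter (fun x => α x ≠ none) with hD
        set S := insert m D with hSdef
        have hmemD : ∀ z, z ∈ D ↔ (z ∈ Finset.Icc 1 n ∧ α z ≠ none) := by
          intro z; simp [hD]
        have hx₀D : x₀ ∈ D := (hmemD x₀).mpr ⟨Finset.mem_Icc.mpr hdom₀, by simp [ha₀]⟩
        have hlbS : ∀ z ∈ S, m ≤ z := by
          intro z hz
          rcases Finset.mem_insert.mp hz with rfl | hzD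
          · exact le_refl _
          · obtain ⟨_, hz2⟩ := (hmemD z).mp hzD
            obtain ⟨a, ha⟩ := Option.ne_none_iff_exists'.mp hz2
            exact le_of_lt (key z a ha).2
        have hminS : sInf (↑S : Set ℕ) = m := by
          have hmS : m ∈ S := Finset.mem_insert_self m D
          have h1 : sInf (↑S : Set ℕ) ≤ m := Nat.sInf_le (by exact_mod_cast hmS)
          have h2 : sInf (↑S : Set ℕ) ∈ S := by
            exact_mod_cast Nat.sInf_mem (⟨m, by exact_mod_cast hmS⟩ : (↑S : Set ℕ).Nonempty)
          exact le_antisymm h1 (hlbS _ h2)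
        have hSsub : S ⊆ Finset.Icc d₀ n := by
          intro z hz
          rcases Finset.mem_insert.mp hz with rfl | hzD
          · exact Finset.mem_Icc.mpr ⟨by omega, by omega⟩
          · obtain ⟨hz1, hz2⟩ := (hmemD z).mp hzD
            obtain ⟨a, ha⟩ := Option.ne_none_iff_exists'.mp hz2
            have := hα.2.2.2 z a ha
            exact Finset.mem_Icc.mpr ⟨by omega, (Finset.mem_Icc.mp hz1).2⟩
        have hScard : S.card ≠ 1 := by
          have : 1 < S.card := Finset.one_lt_card.mpr
            ⟨m, Finset.mem_insert_self m D, x₀, Finset.mem_insert_of_mem hx₀D, by omega⟩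
          omega
        refine ⟨⟨S, (hmem S).mpr ⟨hSsub, hScard⟩⟩, ?_⟩
        apply Subtype.ext
        funext x
        simp only
        cases hx : α x with
        | some a =>
          obtain ⟨ha, hlt⟩ := key x a hx
          have hxn := Set.mem_Icc.mp (hα.1.1 x (by simp [hx]))
          have hxD : x ∈ D := (hmemD x).mpr ⟨Finset.mem_Icc.mpr hxn, by simp [hx]⟩
          rw [Fof_some]
          exact ⟨Finset.mem_insert_of_mem hxD, by rw [hminS]; exact hlt, by rw [hminS]; omega⟩
        | none =>
          rw [Fof_eq_none, hminS]
          rintro ⟨hxS, hlt⟩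
          rcases Finset.mem_insert.mp hxS with rfl | hxD
          · omega
          · exact ((hmemD x).mp hxD).2 hx
  rw [← Nat.card_eq_of_bijective _ hbij]
  have hcardt : Nat.card {S // S ∈ t} = t.card := by
    simp [Nat.card_eq_fintype_card]
  rw [hcardt, ht]
  have h1 := Finset.card_filter_add_card_filter_not
    (s := (Finset.Icc d₀ n).powerset) (p := fun S => S.card = 1)
  have h2 : ((Finset.Icc d₀ n).powerset.filter (fun S => S.card = 1)).card
      = (Finset.Icc d₀ n).card := by
    rw [← Finset.powersetCard_eq_filter, Finset.card_powersetCard, Nat.choose_one_right]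
  rw [Finset.card_powerset] at h1
  simp only [ne_eq]
  omega

end OddpAux

/-- The number of fixed-point-free elements of ODDP_n equals |ODDP_(n-1)| = 2^n − n. -/
theorem oddp_fixfree_count (n : ℕ) (hn : 1 ≤ n) :
    Nat.card {α : ℕ → Option ℕ //
      PIso n α ∧ PDecr α ∧ POPres α ∧ PFix α = ∅} =
      Nat.card {α : ℕ → Option ℕ // PIso (n - 1) α ∧ PDecr α ∧ POPres α} ∧
    Nat.card {α : ℕ → Option ℕ //
      PIso n α ∧ PDecr α ∧ POPres α ∧ PFix α = ∅} = 2 ^ n - n := by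
  have e1 : ∀ α : ℕ → Option ℕ,
      (PIso n α ∧ PDecr α ∧ POPres α ∧ PFix α = ∅) ↔ OddpAux.Q 1 n α := by
    intro α
    constructor
    · rintro ⟨h1, h2, h3, h4⟩
      refine ⟨h1, h2, h3, fun x a ha => ?_⟩
      have hle := h2 x a ha
      rcases eq_or_lt_of_le hle with rfl | hlt
      · exfalso
        have : a ∈ PFix α := ha
        rw [h4] at this
        exact this
      · omega
    · rintro ⟨h1, h2, h3, h4⟩
      refine ⟨h1, h2, h3, Set.eq_empty_iff_forall_notMem.mpr fun x hx => ?_⟩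
      have := h4 x x hx
      omega
  have e2 : ∀ α : ℕ → Option ℕ,
      (PIso (n - 1) α ∧ PDecr α ∧ POPres α) ↔ OddpAux.Q 0 (n - 1) α := by
    intro α
    constructor
    · rintro ⟨h1, h2, h3⟩
      exact ⟨h1, h2, h3, fun x a ha => by have := h2 x a ha; omega⟩
    · rintro ⟨h1, h2, h3, _⟩
      exact ⟨h1, h2, h3⟩
  have c1 : Nat.card {α : ℕ → Option ℕ //
      PIso n α ∧ PDecr α ∧ POPres α ∧ PFix α = ∅} = 2 ^ n - n := by
    rw [Nat.card_congr (Equiv.subtypeEquivRight e1), OddpAux.main 1 n]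
    congr 1 <;> simp
  have c2 : Nat.card {α : ℕ → Option ℕ //
      PIso (n - 1) α ∧ PDecr α ∧ POPres α} = 2 ^ n - n := by
    rw [Nat.card_congr (Equiv.subtypeEquivRight e2), OddpAux.main 0 (n - 1)]
    have : (Finset.Icc 0 (n - 1)).card = n := by
      rw [Nat.card_Icc]; omega
    rw [this]
  exact ⟨by rw [c1, c2], c1⟩
end

section
/- For p ≥ 1, there is exactly one order-decreasing, order-reversing partial isometry of the chain {1,...,2p+1} with image of size p+1, namely the map with domain {p+1, p+2, ..., 2p+1} sending p+1+i to p+1−i for 0 ≤ i ≤ p. -/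
/-- For p ≥ 1, the unique order-decreasing, order-reversing partial isometry of
{1,…,2p+1} with image of size p+1 is the map with domain {p+1,…,2p+1} sending
x to 2(p+1) − x. -/
theorem ddpstar_odd_top_height (p : ℕ) (hp : 1 ≤ p) :
    {α : ℕ → Option ℕ |
      PIso (2 * p + 1) α ∧ PDecr α ∧ PORev α ∧ (PImg α).ncard = p + 1} =
    {fun x => if p + 1 ≤ x ∧ x ≤ 2 * p + 1 then some (2 * (p + 1) - x) else none} := by
  ext α
  simp only [Set.mem_setOf_eq, Set.mem_singleton_iff]
  constructor
  · rintro ⟨⟨hdom, himg, hinj, hiso⟩, hdecr, hrev, hcard⟩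
    -- the sum x + α x is constant on the domain
    have hsum : ∀ x y a b, α x = some a → α y = some b → x + a = y + b := by
      intro x y a b hx hy
      have h1 := hiso x y a b hx hy
      rcases le_total x y with h | h
      · have := hrev x y a b hx hy h; omega
      · have := hrev y x b a hy hx h; omega
    have hDfin : (PDom α).Finite :=
      Set.Finite.subset (Set.finite_Icc 1 (2 * p + 1)) (fun x hx => hdom x hx)
    have himg_eq : PImg α = (fun x => (α x).getD 0) '' PDom α := by
      ext y
      constructor
      · rintro ⟨x, hx⟩
        exact ⟨x, by simp [PDom, hx], by simp [hx]⟩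
      · rintro ⟨x, hx1, hx2⟩
        obtain ⟨a, ha⟩ := Option.ne_none_iff_exists'.mp hx1
        refine ⟨x, ?_⟩
        simp only [ha, Option.getD_some] at hx2
        rw [ha, hx2]
    have hinjOn : Set.InjOn (fun x => (α x).getD 0) (PDom α) := by
      intro x hx y hy hxy
      obtain ⟨a, ha⟩ := Option.ne_none_iff_exists'.mp hx
      obtain ⟨b, hb⟩ := Option.ne_none_iff_exists'.mp hy
      simp only [ha, hb, Option.getD_some] at hxy
      subst hxy
      exact hinj x y a ha hb
    have hDcard : (PDom α).ncard = p + 1 := by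
      rw [himg_eq, Set.ncard_image_of_injOn hinjOn] at hcard
      exact hcard
    set D := hDfin.toFinset with hD
    have hDcard' : D.card = p + 1 := by
      rw [Set.ncard_eq_toFinset_card _ hDfin] at hDcard
      exact hDcard
    have hDne : D.Nonempty := Finset.card_pos.mp (by omega)
    set m := D.min' hDne with hm
    set M := D.max' hDne with hM
    have hmD : m ∈ D := D.min'_mem hDne
    have hMD : M ∈ D := D.max'_mem hDne
    have hmem : ∀ x, x ∈ D ↔ α x ≠ none := by
      intro x
      rw [hD, Set.Finite.mem_toFinset]
      rfl
    obtain ⟨am, ham⟩ := Option.ne_none_iff_exists'.mp ((hmem m).mp hmD)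
    obtain ⟨aM, haM⟩ := Option.ne_none_iff_exists'.mp ((hmem M).mp hMD)
    have h1 : 1 ≤ am := (himg m am ham).1
    have h2 : am ≤ m := hdecr m am ham
    have h3 : M ≤ 2 * p + 1 := (hdom M ((hmem M).mp hMD)).2
    have h4 : 1 ≤ aM := (himg M aM haM).1
    have hc : m + am = M + aM := hsum m M am aM ham haM
    have hsub : D ⊆ Finset.Icc m M :=
      fun x hx => Finset.mem_Icc.mpr ⟨D.min'_le x hx, D.le_max' x hx⟩
    have hmM : m ≤ M := D.min'_le M hMD
    have hMm : p + 1 ≤ M - m + 1 := by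
      have := Finset.card_le_card hsub
      rw [Nat.card_Icc] at this
      omega
    have hmval : m = p + 1 := by omega
    have hMval : M = 2 * p + 1 := by omega
    have hcval : m + am = 2 * p + 2 := by omega
    have hDeq : D = Finset.Icc (p + 1) (2 * p + 1) := by
      refine Finset.eq_of_subset_of_card_le ?_ ?_
      · rwa [hmval, hMval] at hsub
      · rw [Nat.card_Icc]; omega
    funext x
    by_cases hx : p + 1 ≤ x ∧ x ≤ 2 * p + 1
    · have hxD : x ∈ D := hDeq ▸ Finset.mem_Icc.mpr hx
      obtain ⟨a, ha⟩ := Option.ne_none_iff_exists'.mp ((hmem x).mp hxD)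
      have hxa := hsum x m a am ha ham
      rw [ha, if_pos hx]
      congr 1
      omega
    · have hxD : x ∉ D := by
        rw [hDeq, Finset.mem_Icc]
        omega
      have hnone : α x = none := by
        by_contra h
        exact hxD ((hmem x).mpr h)
      rw [hnone, if_neg hx]
  · rintro rfl
    have hβ : ∀ x a,
        (if p + 1 ≤ x ∧ x ≤ 2 * p + 1 then some (2 * (p + 1) - x) else none) = some a →
        p + 1 ≤ x ∧ x ≤ 2 * p + 1 ∧ a = 2 * (p + 1) - x := by
      intro x a h
      split_ifs at h with hc
      exact ⟨hc.1, hc.2, (Option.some_inj.mp h).symm⟩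
    refine ⟨⟨?_, ?_, ?_, ?_⟩, ?_, ?_, ?_⟩
    · intro x hx
      by_cases hc : p + 1 ≤ x ∧ x ≤ 2 * p + 1
      · exact Set.mem_Icc.mpr ⟨by omega, hc.2⟩
      · exact absurd (if_neg hc) hx
    · intro x y h
      obtain ⟨h1, h2, h3⟩ := hβ x y h
      exact Set.mem_Icc.mpr ⟨by omega, by omega⟩
    · intro x y a hx hy
      obtain ⟨h1, h2, h3⟩ := hβ x a hx
      obtain ⟨h4, h5, h6⟩ := hβ y a hy
      omega
    · intro x y a b hx hy
      obtain ⟨h1, h2, h3⟩ := hβ x a hx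
      obtain ⟨h4, h5, h6⟩ := hβ y b hy
      omega
    · intro x a h
      obtain ⟨h1, h2, h3⟩ := hβ x a h
      omega
    · intro x y a b hx hy hxy
      obtain ⟨h1, h2, h3⟩ := hβ x a hx
      obtain ⟨h4, h5, h6⟩ := hβ y b hy
      omega
    · have himg : PImg (fun x => if p + 1 ≤ x ∧ x ≤ 2 * p + 1
          then some (2 * (p + 1) - x) else none) = Set.Icc 1 (p + 1) := by
        ext y
        simp only [PImg, Set.mem_setOf_eq, Set.mem_Icc]
        constructor
        · rintro ⟨x, hx⟩
          obtain ⟨h1, h2, h3⟩ := hβ x y hx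
          omega
        · rintro ⟨h1, h2⟩
          refine ⟨2 * (p + 1) - y, ?_⟩
          rw [if_pos ⟨by omega, by omega⟩]
          congr 1
          omega
      rw [himg, ← Finset.coe_Icc, Set.ncard_coe_finset, Nat.card_Icc]
      omega
end

section
/- For p ≥ 1, there are exactly three order-decreasing, order-reversing partial isometries of the chain {1,...,2p} with image of size p. -/
theorem ncard_pImg_eq_ncard_pDom {α : ℕ → Option ℕ}
    (hinj : ∀ x y a, α x = some a → α y = some a → x = y) :
    (PImg α).ncard = (PDom α).ncard := by
  symm
  refine Set.ncard_congr (fun x hx => (α x).get (Option.isSome_iff_ne_none.2 hx))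
    (fun x _ => ⟨x, (Option.some_get _).symm⟩) (fun x y _ _ hxy => ?_) ?_
  · exact hinj x y _ (Option.some_get _).symm (by rw [hxy]; exact (Option.some_get _).symm)
  · rintro a ⟨x, hx⟩
    exact ⟨x, by simp [PDom, hx], by simp [hx]⟩

theorem pDom_subset_of_graph_subset {α β : ℕ → Option ℕ}
    (hsub : ∀ x a, α x = some a → β x = some a) : PDom α ⊆ PDom β := by
  intro x hx
  obtain ⟨a, ha⟩ := Option.ne_none_iff_exists'.1 hx
  simp [PDom, hsub x a ha]

theorem eq_of_graph_subset {α β : ℕ → Option ℕ} (hsub : ∀ x a, α x = some a → β x = some a)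
    (hfin : (PDom β).Finite) (hcard : (PDom β).ncard ≤ (PDom α).ncard) : α = β := by
  have hdom : PDom α = PDom β :=
    Set.eq_of_subset_of_ncard_le (pDom_subset_of_graph_subset hsub) hcard hfin
  funext x
  cases hx : α x with
  | none => simpa [PDom, hx, eq_comm] using (Set.ext_iff.1 hdom x).not
  | some a => exact (hsub x a hx).symm

theorem add_eq_add_of_pORev {n : ℕ} {α : ℕ → Option ℕ} (hα : PIso n α) (hrev : PORev α)
    {x y a b : ℕ} (hx : α x = some a) (hy : α y = some b) : a + x = b + y := by
  have hdist := hα.2.2.2 x y a b hx hy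
  rcases le_total x y with hxy | hyx
  · have := hrev x y a b hx hy hxy; omega
  · have := hrev y x b a hy hx hyx; omega

def reflection (n c : ℕ) : ℕ → Option ℕ :=
  fun x => if x ≤ n ∧ x < c ∧ c ≤ 2 * x then some (c - x) else none

theorem reflection_eq_some {n c x a : ℕ} :
    reflection n c x = some a ↔ x ≤ n ∧ x < c ∧ c ≤ 2 * x ∧ a = c - x := by
  unfold reflection
  split_ifs with h
  · simp [h, eq_comm]
  · simp only [false_iff]; omega

theorem pIso_reflection (n c : ℕ) : PIso n (reflection n c) := by
  refine ⟨fun x hx => ?_, fun x a h => ?_, fun x y a hx hy => ?_, fun x y a b hx hy => ?_⟩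
  · obtain ⟨a, ha⟩ := Option.ne_none_iff_exists'.1 hx
    rw [reflection_eq_some] at ha
    simp only [Set.mem_Icc]; omega
  · rw [reflection_eq_some] at h
    simp only [Set.mem_Icc]; omega
  all_goals rw [reflection_eq_some] at hx hy; omega

theorem pDecr_reflection (n c : ℕ) : PDecr (reflection n c) := by
  intro x a h
  rw [reflection_eq_some] at h
  omega

theorem pORev_reflection (n c : ℕ) : PORev (reflection n c) := by
  intro x y a b hx hy _
  rw [reflection_eq_some] at hx hy
  omega

theorem pDom_reflection (n c : ℕ) :
    PDom (reflection n c) = Set.Ico ((c + 1) / 2) (min (n + 1) c) := by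
  ext x
  simp only [PDom, Set.mem_ofPred_eq, Option.ne_none_iff_exists', reflection_eq_some,
    Set.mem_Ico]
  constructor
  · rintro ⟨a, hx, hc, h2, -⟩; omega
  · intro h; exact ⟨c - x, by omega, by omega, by omega, rfl⟩

theorem ncard_pDom_reflection (n c : ℕ) :
    (PDom (reflection n c)).ncard = min (n + 1) c - (c + 1) / 2 := by
  rw [pDom_reflection, Set.ncard_Ico_nat]

theorem reflection_injOn (n : ℕ) : Set.InjOn (reflection n) (Set.Icc 2 (2 * n)) := by
  intro c hc c' _ h
  have hx : reflection n c ((c + 1) / 2) = some (c - (c + 1) / 2) := by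
    rw [reflection_eq_some]; simp only [Set.mem_Icc] at hc; omega
  rw [h, reflection_eq_some] at hx
  omega

theorem reflection_eq_some_of_eq_some {n : ℕ} {α : ℕ → Option ℕ} (hα : PIso n α)
    (hdec : PDecr α) (hrev : PORev α) {x₀ a₀ x a : ℕ} (h₀ : α x₀ = some a₀)
    (h : α x = some a) : reflection n (a₀ + x₀) x = some a := by
  have hsum := add_eq_add_of_pORev hα hrev h h₀
  have hx := hα.1 x (by simp [h])
  have ha := hα.2.1 x a h
  have := hdec x a h
  simp only [Set.mem_Icc] at hx ha
  rw [reflection_eq_some]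
  omega

theorem exists_reflection_eq {p : ℕ} {α : ℕ → Option ℕ} (hp : 1 ≤ p) (hα : PIso (2 * p) α)
    (hdec : PDecr α) (hrev : PORev α) (hcard : (PImg α).ncard = p) :
    ∃ c ∈ Set.Icc (2 * p) (2 * p + 2), reflection (2 * p) c = α := by
  rw [ncard_pImg_eq_ncard_pDom hα.2.2.1] at hcard
  obtain ⟨x₀, hx₀⟩ := Set.nonempty_of_ncard_ne_zero (s := PDom α) (by omega)
  obtain ⟨a₀, h₀⟩ := Option.ne_none_iff_exists'.1 hx₀
  have hsub : ∀ x a, α x = some a → reflection (2 * p) (a₀ + x₀) x = some a :=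
    fun _ _ => reflection_eq_some_of_eq_some hα hdec hrev h₀
  have hfin : (PDom (reflection (2 * p) (a₀ + x₀))).Finite := by
    rw [pDom_reflection]; exact Set.finite_Ico _ _
  have hle := Set.ncard_le_ncard (pDom_subset_of_graph_subset hsub) hfin
  rw [ncard_pDom_reflection] at hle
  have hc : a₀ + x₀ ∈ Set.Icc (2 * p) (2 * p + 2) := by
    simp only [Set.mem_Icc]; omega
  refine ⟨a₀ + x₀, hc, (eq_of_graph_subset hsub hfin ?_).symm⟩
  rw [hcard, ncard_pDom_reflection]
  simp only [Set.mem_Icc] at hc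
  omega

/-- For p ≥ 1, there are exactly three order-decreasing, order-reversing partial
isometries of {1,…,2p} with image of size p. -/
theorem ddpstar_even_top_height (p : ℕ) (hp : 1 ≤ p) :
    Nat.card {α : ℕ → Option ℕ //
      PIso (2 * p) α ∧ PDecr α ∧ PORev α ∧ (PImg α).ncard = p} = 3 := by
  have hset : {α : ℕ → Option ℕ | PIso (2 * p) α ∧ PDecr α ∧ PORev α ∧ (PImg α).ncard = p}
      = reflection (2 * p) '' Set.Icc (2 * p) (2 * p + 2) := by
    ext α
    constructor
    · rintro ⟨hα, hdec, hrev, hcard⟩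
      exact exists_reflection_eq hp hα hdec hrev hcard
    · rintro ⟨c, hc, rfl⟩
      refine ⟨pIso_reflection _ _, pDecr_reflection _ _, pORev_reflection _ _, ?_⟩
      rw [ncard_pImg_eq_ncard_pDom (pIso_reflection _ _).2.2.1, ncard_pDom_reflection]
      simp only [Set.mem_Icc] at hc
      omega
  have hinj : Set.InjOn (reflection (2 * p)) (Set.Icc (2 * p) (2 * p + 2)) :=
    (reflection_injOn _).mono (Set.Icc_subset_Icc (by omega) (by omega))
  have hcard : Nat.card (reflection (2 * p) '' Set.Icc (2 * p) (2 * p + 2)) = 3 := by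
    rw [Nat.card_coe_set_eq, hinj.ncard_image, Set.ncard_Icc_nat]
    omega
  rwa [← hset] at hcard
end

section
/- Every order-decreasing, order-reversing partial isometry of {1,...,n} with image of size at least 2 has image size at most ⌊(n+1)/2⌋; equivalently, order-decreasing order-reversing partial isometries of height p ≥ 2 exist only when p ≤ (n+1)/2. -/
/-- An order-decreasing, order-reversing partial isometry of {1,…,n} of height
at least 2 has height at most ⌊(n+1)/2⌋. -/
theorem ddpstar_height_bound (n : ℕ) (α : ℕ → Option ℕ)
    (h : PIso n α) (hd : PDecr α) (hr : PORev α)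
    (h2 : 2 ≤ (PImg α).ncard) :
    (PImg α).ncard ≤ (n + 1) / 2 := by
  obtain ⟨h1, himg, hinj, hiso⟩ := h
  -- key: x + αx is constant on the domain
  have key : ∀ x y a b, α x = some a → α y = some b → x + a = y + b := by
    intro x y a b hx hy
    have hiso' := hiso x y a b hx hy
    rcases le_total x y with hxy | hxy
    · have := hr x y a b hx hy hxy
      omega
    · have := hr y x b a hy hx hxy
      omega
  have hfin : (PImg α).Finite := by
    apply Set.Finite.subset (Set.finite_Icc 1 n)
    rintro a ⟨x, hx⟩
    exact himg x a hx
  obtain ⟨a1, a2, ⟨x1, hx1⟩, ⟨x2, hx2⟩, hne⟩ :=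
    (Set.one_lt_ncard_iff hfin).mp (by omega)
  set c := x1 + a1 with hc
  -- every image element a with witness x satisfies x + a = c
  have hsub : PImg α ⊆ Set.Icc (max 1 (c - n)) (c / 2) := by
    rintro a ⟨x, hx⟩
    have hxa : x + a = c := key x x1 a a1 hx hx1
    have hax : a ≤ x := hd x a hx
    have hx1n := h1 x (by simp [hx])
    have han := himg x a hx
    simp only [Set.mem_Icc] at hx1n han ⊢
    omega
  have hcard : (PImg α).ncard ≤ (Set.Icc (max 1 (c - n)) (c / 2)).ncard :=
    Set.ncard_le_ncard hsub (Set.finite_Icc _ _)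
  have hIcc : (Set.Icc (max 1 (c - n)) (c / 2)).ncard
      = c / 2 + 1 - max 1 (c - n) := by
    rw [← Nat.card_Icc, ← Set.ncard_coe_finset, Finset.coe_Icc]
  -- need c ≥ 3 to conclude; derive from two distinct image points
  have hx2c : x2 + a2 = c := key x2 x1 a2 a1 hx2 hx1
  have ha1 := himg x1 a1 hx1
  have ha2 := himg x2 a2 hx2
  have hd1 := hd x1 a1 hx1
  have hd2 := hd x2 a2 hx2
  have hn1 := h1 x1 (by simp [hx1])
  have hn2 := h1 x2 (by simp [hx2])
  simp only [Set.mem_Icc] at ha1 ha2 hn1 hn2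
  omega
end

section
/- Let α be an order-decreasing, order-reversing partial isometry of {1,...,n}, let M = max(Dom α) and suppose M − r ∈ Dom α while M − s ∉ Dom α for all 1 ≤ s < r. Then min(Dom α) > r. -/
/-- Let α be an order-decreasing, order-reversing partial isometry of {1,…,n}
with at least two points in its domain, M = max(Dom α), r ≥ 1 with
M − r ∈ Dom α and M − s ∉ Dom α for 1 ≤ s < r. Then min(Dom α) > r. -/
theorem ddpstar_gap_lemma (n : ℕ) (α : ℕ → Option ℕ)
    (h : PIso n α) (hd : PDecr α) (hrev : PORev α)
    (hcard : 2 ≤ (PDom α).ncard)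
    (M r : ℕ) (hM : IsGreatest (PDom α) M) (hr1 : 1 ≤ r)
    (hmem : M - r ∈ PDom α)
    (hgap : ∀ s, 1 ≤ s → s < r → M - s ∉ PDom α) :
    ∀ x ∈ PDom α, r < x := by
  intro x hx
  by_contra hle
  push_neg at hle
  obtain ⟨a, ha⟩ := Option.ne_none_iff_exists'.mp hM.1
  obtain ⟨b, hb⟩ := Option.ne_none_iff_exists'.mp hmem
  obtain ⟨c, hc⟩ := Option.ne_none_iff_exists'.mp hx
  have hM1 : 1 ≤ M - r := (h.1 _ hmem).1
  have haM : a ≤ M := hd _ _ ha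
  have ha1 : 1 ≤ a := (h.2.1 _ _ ha).1
  have hba : a ≤ b := hrev _ _ _ _ hb ha (by omega)
  have hiso := h.2.2.2 _ _ _ _ hb ha
  have hcx : c ≤ x := hd _ _ hc
  have hxM : x ≤ M := hM.2 hx
  have hxMr : x ≤ M - r := by
    by_contra hgt
    push_neg at hgt
    exact hgap (M - x) (by omega) (by omega)
      (by rwa [show M - (M - x) = x by omega])
  have hcb : b ≤ c := hrev _ _ _ _ hc hb hxMr
  omega
end

section
/- The number of order-decreasing, order-reversing partial isometries of {1,...,n} with image of size 2 equals (n+1)(n−1)(2n−3)/24 if n is odd, and n(n−2)(2n+1)/24 if n is even. -/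
open Finset

def twoPointMap (x y b : ℕ) : ℕ → Option ℕ :=
  fun t => if t = x then some (b + (y - x)) else if t = y then some b else none

section TwoPointMap

variable {x y b t c : ℕ}

theorem twoPointMap_eq_some :
    twoPointMap x y b t = some c ↔ t = x ∧ c = b + (y - x) ∨ t = y ∧ c = b := by
  unfold twoPointMap
  split_ifs <;> simp only [Option.some.injEq, false_iff] <;> omega

theorem twoPointMap_apply_right : twoPointMap x y b y = some b :=
  twoPointMap_eq_some.mpr (Or.inr ⟨rfl, rfl⟩)

theorem pDom_twoPointMap : PDom (twoPointMap x y b) = {x, y} := by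
  ext t
  simp [PDom, Option.ne_none_iff_exists', twoPointMap_eq_some, exists_or]

theorem pImg_twoPointMap : PImg (twoPointMap x y b) = {b + (y - x), b} := by
  ext c
  simp [PImg, twoPointMap_eq_some, exists_or, eq_comm]

end TwoPointMap

theorem twoPointMap_injOn :
    Set.InjOn (fun p : ℕ × ℕ × ℕ => twoPointMap p.1 p.2.1 p.2.2) {p | p.1 < p.2.1} := by
  rintro ⟨x, y, b⟩ hxy ⟨x', y', b'⟩ hxy' h
  simp only [Set.mem_ofPred_eq] at hxy hxy' h
  have hdom := congrArg PDom h
  rw [pDom_twoPointMap, pDom_twoPointMap, Set.pair_eq_pair_iff] at hdom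
  obtain ⟨rfl, rfl⟩ : x = x' ∧ y = y' := by omega
  have hb := congrFun h y
  rw [twoPointMap_apply_right, twoPointMap_apply_right, Option.some.injEq] at hb
  rw [hb]

def twoPointParams (n : ℕ) : Finset (ℕ × ℕ × ℕ) :=
  {p ∈ range (n + 1) ×ˢ range (n + 1) ×ˢ range (n + 1) |
    p.1 < p.2.1 ∧ 1 ≤ p.2.2 ∧ p.2.2 + p.2.1 ≤ 2 * p.1}

theorem mem_twoPointParams {n x y b : ℕ} :
    (x, y, b) ∈ twoPointParams n ↔ x < y ∧ y ≤ n ∧ 1 ≤ b ∧ b + y ≤ 2 * x := by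
  simp only [twoPointParams, mem_filter, mem_product, mem_range]
  omega

theorem twoPointMap_of_mem_twoPointParams {n x y b : ℕ} (hp : (x, y, b) ∈ twoPointParams n) :
    PIso n (twoPointMap x y b) ∧ PDecr (twoPointMap x y b) ∧ PORev (twoPointMap x y b) ∧
      (PImg (twoPointMap x y b)).ncard = 2 := by
  rw [mem_twoPointParams] at hp
  simp only [PIso, PDecr, PORev, Option.ne_none_iff_exists', twoPointMap_eq_some,
    Set.mem_Icc, pImg_twoPointMap]
  refine ⟨⟨?_, ?_, ?_, ?_⟩, ?_, ?_, Set.ncard_pair (by omega)⟩ <;> intros <;> omega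

theorem exists_twoPointMap_eq {n : ℕ} {α : ℕ → Option ℕ} (hiso : PIso n α) (hdecr : PDecr α)
    (hrev : PORev α) (himg : (PImg α).ncard = 2) :
    ∃ p ∈ twoPointParams n, twoPointMap p.1 p.2.1 p.2.2 = α := by
  obtain ⟨hdom, hcod, hinj, hdist⟩ := hiso
  obtain ⟨a, b, hba, himg⟩ : ∃ a b, b < a ∧ PImg α = {a, b} := by
    obtain ⟨u, v, huv, huv'⟩ := Set.ncard_eq_two.mp himg
    rcases huv.lt_or_gt with h | h
    · exact ⟨v, u, h, huv'.trans (Set.pair_comm u v)⟩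
    · exact ⟨u, v, h, huv'⟩
  obtain ⟨x, hx⟩ : a ∈ PImg α := by simp [himg]
  obtain ⟨y, hy⟩ : b ∈ PImg α := by simp [himg]
  have hxy : x < y := by
    by_contra! h
    have := hrev y x b a hy hx h
    omega
  have hab := hdist x y a b hx hy
  have hyn := hdom y (by simp [hy])
  have hb := hcod y b hy
  have hax := hdecr x a hx
  rw [Set.mem_Icc] at hyn hb
  refine ⟨(x, y, b), mem_twoPointParams.mpr ⟨hxy, by omega, by omega, by omega⟩, ?_⟩
  funext t
  rcases ht : α t with _ | c
  · have htx : t ≠ x := by rintro rfl; simp [hx] at ht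
    have hty : t ≠ y := by rintro rfl; simp [hy] at ht
    simp [twoPointMap, htx, hty]
  · have hc : c ∈ PImg α := ⟨t, ht⟩
    rw [himg, Set.mem_insert_iff, Set.mem_singleton_iff] at hc
    simp only [twoPointMap_eq_some]
    rcases hc with rfl | rfl
    · exact Or.inl ⟨hinj t x c ht hx, by omega⟩
    · exact Or.inr ⟨hinj t y c ht hy, rfl⟩

theorem setOf_eq_image_twoPointMap (n : ℕ) :
    {α : ℕ → Option ℕ | PIso n α ∧ PDecr α ∧ PORev α ∧ (PImg α).ncard = 2} =
      (fun p : ℕ × ℕ × ℕ => twoPointMap p.1 p.2.1 p.2.2) '' twoPointParams n := by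
  ext α
  constructor
  · rintro ⟨hiso, hdecr, hrev, himg⟩
    exact exists_twoPointMap_eq hiso hdecr hrev himg
  · rintro ⟨⟨x, y, b⟩, hp, rfl⟩
    exact twoPointMap_of_mem_twoPointParams hp

theorem card_eq_card_twoPointParams (n : ℕ) :
    Nat.card {α : ℕ → Option ℕ // PIso n α ∧ PDecr α ∧ PORev α ∧ (PImg α).ncard = 2} =
      #(twoPointParams n) := by
  have hinj : Set.InjOn (fun p : ℕ × ℕ × ℕ => twoPointMap p.1 p.2.1 p.2.2) (twoPointParams n) :=
    twoPointMap_injOn.mono fun _ hp => (mem_twoPointParams.mp hp).1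
  rw [← Set.ncard_coe_finset, ← hinj.ncard_image, ← setOf_eq_image_twoPointMap]
  exact Nat.card_coe_set_eq _

theorem card_twoPointParams_add_two (n : ℕ) :
    #(twoPointParams (n + 2)) = #(twoPointParams n) + (n + 1).choose 2 := by
  rw [← card_filter_add_card_filter_not (fun p : ℕ × ℕ × ℕ => p.2.1 ≠ p.1 + 1)]
  have hpairs : (n + 1).choose 2 = #{p ∈ Icc 1 (n + 1) ×ˢ Icc 1 (n + 1) | p.1 < p.2} := by
    rw [card_product_filter_lt, Nat.card_Icc, Nat.add_sub_cancel]
  rw [hpairs]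
  congr 1
  · refine card_nbij' (fun p => (p.1 - 1, p.2.1 - 2, p.2.2)) (fun p => (p.1 + 1, p.2.1 + 2, p.2.2))
      ?_ ?_ ?_ ?_ <;>
    simp only [Set.MapsTo, Set.LeftInvOn, Set.RightInvOn, Prod.forall, mem_coe, mem_filter,
      mem_twoPointParams, Prod.mk.injEq, and_true] <;>
    omega
  · refine card_nbij' (fun p => (p.2.2, p.1)) (fun p => (p.2, p.2 + 1, p.1)) ?_ ?_ ?_ ?_ <;>
    simp only [Set.MapsTo, Set.LeftInvOn, Set.RightInvOn, Prod.forall, mem_coe,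
      mem_filter, mem_twoPointParams, mem_product, mem_Icc, Prod.mk.injEq, and_true, true_and,
      implies_true] <;>
    omega

theorem card_twoPointParams_mul_24 (n : ℕ) :
    (#(twoPointParams n) * 24 : ℤ) = n * (n - 2) * (2 * n + 1) + 3 * (n % 2 : ℕ) := by
  induction n using Nat.twoStepInduction with
  | zero => decide
  | one => decide
  | more n ih _ =>
    have hchoose : ((n + 1).choose 2 * 2 : ℤ) = (n + 1) * n := by
      exact_mod_cast (Nat.choose_one_right n ▸ Nat.add_one_mul_choose_eq n 1).symm
    rw [card_twoPointParams_add_two, Nat.add_mod_right]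
    push_cast at ih ⊢
    linear_combination ih + 12 * hchoose

theorem card_twoPointParams_of_odd {n : ℕ} (hn : Odd n) :
    (n + 1) * (n - 1) * (2 * n - 3) = #(twoPointParams n) * 24 := by
  have h := card_twoPointParams_mul_24 n
  rw [Nat.odd_iff.mp hn] at h
  -- `2 * n - 3` truncates at `n = 1`
  obtain rfl | hn3 : n = 1 ∨ 3 ≤ n := by obtain ⟨k, rfl⟩ := hn; omega
  · norm_num at h ⊢
    exact_mod_cast h.symm
  · zify [show 1 ≤ n by omega, show 3 ≤ 2 * n by omega]
    linear_combination -h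

theorem card_twoPointParams_of_even {n : ℕ} (hn : Even n) :
    n * (n - 2) * (2 * n + 1) = #(twoPointParams n) * 24 := by
  have h := card_twoPointParams_mul_24 n
  rw [Nat.even_iff.mp hn] at h
  obtain rfl | hn2 : n = 0 ∨ 2 ≤ n := by obtain ⟨k, rfl⟩ := hn; omega
  · norm_num at h ⊢
    exact_mod_cast h.symm
  · zify [hn2]
    linear_combination -h

/-- The number of order-decreasing, order-reversing partial isometries of {1,…,n}
with image of size 2 is (n+1)(n−1)(2n−3)/24 for n odd and n(n−2)(2n+1)/24 for n even. -/
theorem ddpstar_height_two_count (n : ℕ) :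
    (Odd n → Nat.card {α : ℕ → Option ℕ //
        PIso n α ∧ PDecr α ∧ PORev α ∧ (PImg α).ncard = 2} =
      (n + 1) * (n - 1) * (2 * n - 3) / 24) ∧
    (Even n → Nat.card {α : ℕ → Option ℕ //
        PIso n α ∧ PDecr α ∧ PORev α ∧ (PImg α).ncard = 2} =
      n * (n - 2) * (2 * n + 1) / 24) := by
  rw [card_eq_card_twoPointParams]
  exact ⟨fun hn => by rw [card_twoPointParams_of_odd hn, Nat.mul_div_cancel _ (by norm_num)],
    fun hn => by rw [card_twoPointParams_of_even hn, Nat.mul_div_cancel _ (by norm_num)]⟩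
end

section
/- The total number of order-decreasing partial isometries of the chain {1,...,2n+1} equals 2^{2n+2} + 5·2^{n+1} − (2n² + 9n + 12), and the total number of order-decreasing partial isometries of {1,...,2n} equals 2^{2n+1} + 7·2^n − (2n² + 7n + 8). -/
/-!
A distance-preserving partial map of ℕ agrees on its domain with a translation `x ↦ x - v` or a
reflection `x ↦ c - x` (both, when the domain is a point). Being order-decreasing means `v < x`,
resp. `x < c ≤ 2 * x`, on the domain. So, besides the empty map, the maps are counted by the
nonempty subsets of `[v + 1, m]` for each shift `v < m`, giving `2 ^ (m + 1) - m - 2`, and by the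
subsets with at least two points of the window `[⌈c / 2⌉, min (c - 1) m]` for each centre `c`.
The window sizes run through `0, 1, 1, 2, 2, …` up to the middle and back down, and summing
`2 ^ ℓ - ℓ - 1` over them gives the closed forms.
-/

open Finset

def restrictTo (D : Finset ℕ) (f : ℕ → ℕ) : ℕ → Option ℕ :=
  fun x => if x ∈ D then some (f x) else none

section restrictTo

variable {D E : Finset ℕ} {f g : ℕ → ℕ}

@[simp]
lemma restrictTo_eq_some {x y : ℕ} : restrictTo D f x = some y ↔ x ∈ D ∧ f x = y := by
  unfold restrictTo; split_ifs <;> simp [*]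

@[simp]
lemma restrictTo_eq_none {x : ℕ} : restrictTo D f x = none ↔ x ∉ D := by
  unfold restrictTo; split_ifs <;> simp [*]

lemma restrictTo_inj : restrictTo D f = restrictTo E g ↔ D = E ∧ Set.EqOn f g D := by
  constructor
  · intro h
    have hD : D = E := by
      ext x
      simpa [not_iff_not] using congrArg (· = none) (congrFun h x)
    subst hD
    refine ⟨rfl, fun x (hx : x ∈ D) => ?_⟩
    simpa [restrictTo, hx] using congrFun h x
  · rintro ⟨rfl, hfg⟩
    funext x
    by_cases hx : x ∈ D
    · simp [restrictTo, hx, hfg hx]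
    · simp [restrictTo, hx]

lemma eq_restrictTo {α : ℕ → Option ℕ} (hdom : ∀ x, α x ≠ none ↔ x ∈ D)
    (hval : ∀ x z, α x = some z → f x = z) : α = restrictTo D f := by
  funext x
  cases hx : α x with
  | none => exact (restrictTo_eq_none.mpr (by simpa [hx] using hdom x)).symm
  | some z => exact (restrictTo_eq_some.mpr ⟨(hdom x).mp (by simp [hx]), hval x z hx⟩).symm

end restrictTo

/- If `x` satisfies only the reflection identity and `y` only the translation identity, then
`|2 * p - x - y| = |x - y|` forces `p = x` or `p = y`. -/
lemma shift_or_reflect_of_isometry {α : ℕ → Option ℕ}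
    (hiso : ∀ x y a b, α x = some a → α y = some b →
      ((a : ℤ) - (b : ℤ)).natAbs = ((x : ℤ) - (y : ℤ)).natAbs)
    {p a : ℕ} (hp : α p = some a) :
    (∀ x z, α x = some z → z + p = x + a) ∨ (∀ x z, α x = some z → z + x = a + p) := by
  by_contra! h
  obtain ⟨⟨x, z, hz, hxz⟩, ⟨y, w, hw, hyw⟩⟩ := h
  have := hiso x p z a hz hp
  have := hiso y p w a hw hp
  have := hiso x y z w hz hw
  omega

abbrev DDPCode := Option ((Σ _ : ℕ, Finset ℕ) ⊕ (Σ _ : ℕ, Finset ℕ))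

def DDPCode.toMap : DDPCode → ℕ → Option ℕ
  | none => restrictTo ∅ id
  | some (.inl ⟨v, D⟩) => restrictTo D (· - v)
  | some (.inr ⟨c, D⟩) => restrictTo D (c - ·)

def shiftCodes (m : ℕ) : Finset (Σ _ : ℕ, Finset ℕ) :=
  (range m).sigma fun v => (Icc (v + 1) m).powerset.erase ∅

-- A reflection of a one-point domain is also a translation.
def reflectCodes (m : ℕ) : Finset (Σ _ : ℕ, Finset ℕ) :=
  (range (2 * m + 1)).sigma fun c => {D ∈ (Ico ((c + 1) / 2) (min c (m + 1))).powerset | 2 ≤ #D}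

def ddpCodes (m : ℕ) : Finset DDPCode :=
  ((shiftCodes m).disjSum (reflectCodes m)).insertNone

lemma mem_shiftCodes {m v : ℕ} {D : Finset ℕ} :
    ⟨v, D⟩ ∈ shiftCodes m ↔ D.Nonempty ∧ ∀ x ∈ D, v < x ∧ x ≤ m := by
  simp only [shiftCodes, mem_sigma, mem_range, mem_erase, mem_powerset, ne_eq,
    ← nonempty_iff_ne_empty, subset_iff, mem_Icc, Nat.succ_le_iff]
  constructor
  · exact fun ⟨_, hne, hD⟩ => ⟨hne, hD⟩
  · rintro ⟨⟨x, hx⟩, hD⟩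
    exact ⟨by have := hD x hx; omega, ⟨x, hx⟩, hD⟩

lemma mem_reflectCodes {m c : ℕ} {D : Finset ℕ} :
    ⟨c, D⟩ ∈ reflectCodes m ↔ 2 ≤ #D ∧ ∀ x ∈ D, x < c ∧ c ≤ 2 * x ∧ x ≤ m := by
  simp only [reflectCodes, mem_sigma, mem_range, mem_filter, mem_powerset, subset_iff, mem_Ico,
    lt_min_iff, Nat.lt_succ_iff]
  constructor
  · rintro ⟨_, hD, hcard⟩
    exact ⟨hcard, fun x hx => by have := hD hx; omega⟩
  · rintro ⟨hcard, hD⟩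
    obtain ⟨x, hx⟩ := card_pos.mp (by omega : 0 < #D)
    exact ⟨by have := hD x hx; omega, fun y hy => by have := hD y hy; omega, hcard⟩

lemma shift_isDDP {m v : ℕ} {D : Finset ℕ} (hD : ∀ x ∈ D, v < x ∧ x ≤ m) :
    PIso m (restrictTo D (· - v)) ∧ PDecr (restrictTo D (· - v)) := by
  simp only [PIso, PDecr, ne_eq, restrictTo_eq_none, not_not, restrictTo_eq_some, Set.mem_Icc]
  refine ⟨⟨fun x hx => ?_, ?_, ?_, ?_⟩, ?_⟩
  · have := hD x hx; omega
  · rintro x _ ⟨hx, rfl⟩; have := hD x hx; omega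
  · rintro x y _ ⟨hx, rfl⟩ ⟨hy, h⟩; have := hD x hx; have := hD y hy; omega
  · rintro x y _ _ ⟨hx, rfl⟩ ⟨hy, rfl⟩; have := hD x hx; have := hD y hy; omega
  · rintro x _ ⟨hx, rfl⟩; omega

lemma reflect_isDDP {m c : ℕ} {D : Finset ℕ} (hD : ∀ x ∈ D, x < c ∧ c ≤ 2 * x ∧ x ≤ m) :
    PIso m (restrictTo D (c - ·)) ∧ PDecr (restrictTo D (c - ·)) := by
  simp only [PIso, PDecr, ne_eq, restrictTo_eq_none, not_not, restrictTo_eq_some, Set.mem_Icc]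
  refine ⟨⟨fun x hx => ?_, ?_, ?_, ?_⟩, ?_⟩
  · have := hD x hx; omega
  · rintro x _ ⟨hx, rfl⟩; have := hD x hx; omega
  · rintro x y _ ⟨hx, rfl⟩ ⟨hy, h⟩; have := hD x hx; have := hD y hy; omega
  · rintro x y _ _ ⟨hx, rfl⟩ ⟨hy, rfl⟩; have := hD x hx; have := hD y hy; omega
  · rintro x _ ⟨hx, rfl⟩; have := hD x hx; omega

@[simp]
lemma some_inl_mem_ddpCodes {m : ℕ} {s : Σ _ : ℕ, Finset ℕ} :
    some (.inl s) ∈ ddpCodes m ↔ s ∈ shiftCodes m := by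
  simp [ddpCodes]

@[simp]
lemma some_inr_mem_ddpCodes {m : ℕ} {s : Σ _ : ℕ, Finset ℕ} :
    some (.inr s) ∈ ddpCodes m ↔ s ∈ reflectCodes m := by
  simp [ddpCodes]

lemma toMap_isDDP {m : ℕ} {k : DDPCode} (hk : k ∈ ddpCodes m) :
    PIso m k.toMap ∧ PDecr k.toMap := by
  rcases k with _ | ⟨v, D⟩ | ⟨c, D⟩
  · simp [DDPCode.toMap, PIso, PDecr]
  · rw [some_inl_mem_ddpCodes, mem_shiftCodes] at hk
    exact shift_isDDP hk.2
  · rw [some_inr_mem_ddpCodes, mem_reflectCodes] at hk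
    exact reflect_isDDP hk.2

lemma toMap_injOn (m : ℕ) : Set.InjOn DDPCode.toMap (ddpCodes m) := by
  -- equal maps have equal domains; a translation and a reflection agree on at most one point
  rintro (_ | ⟨v, D⟩ | ⟨c, D⟩) hk (_ | ⟨w, E⟩ | ⟨d, E⟩) hk' h <;>
    simp only [DDPCode.toMap, restrictTo_inj] at h <;> obtain ⟨rfl, hfg⟩ := h <;>
    simp_all [mem_shiftCodes, mem_reflectCodes, Set.EqOn]
  · obtain ⟨x, hx⟩ := hk.1
    have := hfg hx; have := hk.2 x hx; have := hk' x hx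
    omega
  · obtain ⟨x, hx, y, hy, hxy⟩ := one_lt_card.mp hk'.1
    have := hfg hx; have := hfg hy; have := hk.2 x hx; have := hk.2 y hy
    have := hk'.2 x hx; have := hk'.2 y hy
    omega
  · obtain ⟨x, hx, y, hy, hxy⟩ := one_lt_card.mp hk.1
    have := hfg hx; have := hfg hy; have := hk.2 x hx; have := hk.2 y hy
    have := hk'.2 x hx; have := hk'.2 y hy
    omega
  · obtain ⟨x, hx⟩ := card_pos.mp (by omega : 0 < #D)
    have := hfg hx; have := hk.2 x hx; have := hk' x hx
    omega

lemma exists_toMap_eq {m : ℕ} {α : ℕ → Option ℕ} (hiso : PIso m α) (hdecr : PDecr α) :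
    ∃ k ∈ ddpCodes m, k.toMap = α := by
  obtain ⟨hdom, himg, -, hdist⟩ := hiso
  set D := {x ∈ Icc 1 m | α x ≠ none}
  have hD : ∀ x, α x ≠ none ↔ x ∈ D := fun x => by
    simpa [D] using fun hx => (Set.mem_Icc.mp (hdom x hx))
  have hval : ∀ x ∈ D, ∃ z, α x = some z ∧ 1 ≤ z ∧ z ≤ x ∧ x ≤ m := fun x hx => by
    obtain ⟨z, hz⟩ := Option.ne_none_iff_exists'.mp ((hD x).mpr hx)
    exact ⟨z, hz, (himg x z hz).1, hdecr x z hz, (hdom x (by simp [hz])).2⟩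
  rcases D.eq_empty_or_nonempty with hD₀ | ⟨p, hp⟩
  · exact ⟨none, by simp [ddpCodes], (eq_restrictTo (by simpa [hD₀] using hD)
      fun x z hz => absurd ((hD x).mp (by simp [hz])) (by simp [hD₀])).symm⟩
  obtain ⟨a, ha, -, hap, -⟩ := hval p hp
  by_cases hshift : ∀ x z, α x = some z → z + p = x + a
  · refine ⟨some (.inl ⟨p - a, D⟩), ?_, (eq_restrictTo hD fun x z hz => ?_).symm⟩
    · rw [some_inl_mem_ddpCodes, mem_shiftCodes]
      refine ⟨⟨p, hp⟩, fun x hx => ?_⟩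
      obtain ⟨z, hz, hz₁, -, hxm⟩ := hval x hx
      have := hshift x z hz
      omega
    · have := hshift x z hz
      omega
  · have hreflect := (shift_or_reflect_of_isometry hdist ha).resolve_left hshift
    simp only [not_forall] at hshift
    obtain ⟨x₀, z₀, hz₀, hne⟩ := hshift
    refine ⟨some (.inr ⟨a + p, D⟩), ?_, (eq_restrictTo hD fun x z hz => ?_).symm⟩
    · rw [some_inr_mem_ddpCodes, mem_reflectCodes]
      refine ⟨one_lt_card.mpr ⟨x₀, (hD x₀).mp (by simp [hz₀]), p, hp, ?_⟩, fun x hx => ?_⟩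
      · rintro rfl
        rw [ha, Option.some.injEq] at hz₀
        omega
      · obtain ⟨z, hz, hz₁, hzx, hxm⟩ := hval x hx
        have := hreflect x z hz
        omega
    · have := hreflect x z hz
      omega

lemma card_ddp_eq_card_ddpCodes (m : ℕ) :
    Nat.card {α : ℕ → Option ℕ // PIso m α ∧ PDecr α} = #(ddpCodes m) := by
  have himage : {α | PIso m α ∧ PDecr α} = DDPCode.toMap '' ↑(ddpCodes m) := by
    ext α
    constructor
    · rintro ⟨hiso, hdecr⟩
      exact exists_toMap_eq hiso hdecr
    · rintro ⟨k, hk, rfl⟩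
      exact toMap_isDDP hk
  change Nat.card {α | PIso m α ∧ PDecr α} = _
  rw [himage, Nat.card_coe_set_eq, (toMap_injOn m).ncard_image, Set.ncard_coe_finset]

lemma card_powerset_filter_two_le {α : Type*} [DecidableEq α] (s : Finset α) :
    #{t ∈ s.powerset | 2 ≤ #t} = 2 ^ #s - #s - 1 := by
  have hsmall : {t ∈ s.powerset | ¬ 2 ≤ #t} = powersetCard 0 s ∪ powersetCard 1 s := by
    ext t
    simp only [mem_filter, mem_powerset, mem_union, mem_powersetCard, ← and_or_left]
    exact and_congr_right fun _ => by omega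
  have h := card_filter_add_card_filter_not (s := s.powerset) (fun t => 2 ≤ #t)
  rw [hsmall, card_union_of_disjoint (pairwise_disjoint_powersetCard s zero_ne_one),
    card_powersetCard, card_powersetCard, card_powerset] at h
  simp only [Nat.choose_zero_right, Nat.choose_one_right] at h
  omega

lemma sum_range_two_pow_sub_one (m : ℕ) :
    ∑ v ∈ range m, (2 ^ (m - v) - 1) + m + 2 = 2 ^ (m + 1) := by
  induction m with
  | zero => simp
  | succ m ih =>
    rw [sum_range_succ']
    simp only [Nat.add_sub_add_right, Nat.sub_zero]
    have := Nat.one_le_two_pow (n := m + 1)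
    omega

lemma card_shiftCodes (m : ℕ) : #(shiftCodes m) + m + 2 = 2 ^ (m + 1) := by
  rw [shiftCodes, card_sigma, ← sum_range_two_pow_sub_one m]
  congr 2
  refine sum_congr rfl fun v _ => ?_
  rw [card_erase_of_mem (empty_mem_powerset _), card_powerset, Nat.card_Icc, Nat.add_sub_add_right]

def halfSum (M : ℕ) : ℕ := ∑ c ∈ range M, (2 ^ (c / 2) - c / 2 - 1)

-- The window of the centre `c` has `c / 2` points for `c ≤ m`, and `j / 2 + 1` points
-- for `c = 2 * m - j` with `j < m`.
lemma card_reflectCodes (m : ℕ) : #(reflectCodes m) = halfSum (m + 1) + halfSum (m + 2) := by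
  simp only [reflectCodes, card_sigma, card_powerset_filter_two_le, Nat.card_Ico]
  rw [show 2 * m + 1 = (m + 1) + m by omega, sum_range_add]
  congr 1
  · refine sum_congr rfl fun c hc => ?_
    rw [mem_range] at hc
    rw [show min c (m + 1) - (c + 1) / 2 = c / 2 by omega]
  · rw [halfSum, sum_range_succ', sum_range_succ', ← sum_range_reflect]
    simp only [Nat.zero_div, pow_zero]
    refine sum_congr rfl fun i hi => ?_
    rw [mem_range] at hi
    rw [show min (m + 1 + (m - 1 - i)) (m + 1) - (m + 1 + (m - 1 - i) + 1) / 2 = (i + 1 + 1) / 2 by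
      omega]

lemma halfSum_two_mul (n : ℕ) : halfSum (2 * n) + n ^ 2 + n + 2 = 2 ^ (n + 1) := by
  induction n with
  | zero => simp [halfSum]
  | succ n ih =>
    rw [halfSum, show 2 * (n + 1) = 2 * n + 1 + 1 by ring, sum_range_succ, sum_range_succ,
      ← halfSum, show (2 * n + 1) / 2 = n by omega, show 2 * n / 2 = n by omega]
    have := Nat.lt_two_pow_self (n := n)
    have : (n + 1) ^ 2 = n ^ 2 + 2 * n + 1 := by ring
    omega

lemma halfSum_two_mul_add_one (n : ℕ) :
    halfSum (2 * n + 1) = halfSum (2 * n) + (2 ^ n - n - 1) := by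
  rw [halfSum, sum_range_succ, ← halfSum, show 2 * n / 2 = n by omega]

lemma card_reflectCodes_two_mul (n : ℕ) :
    #(reflectCodes (2 * n)) + (2 * n ^ 2 + 5 * n + 7) = 7 * 2 ^ n := by
  rw [card_reflectCodes, halfSum_two_mul_add_one, show 2 * n + 2 = 2 * (n + 1) by ring]
  have := halfSum_two_mul n
  have := halfSum_two_mul (n + 1)
  have := Nat.lt_two_pow_self (n := n)
  have : (n + 1) ^ 2 = n ^ 2 + 2 * n + 1 := by ring
  omega

lemma card_reflectCodes_two_mul_add_one (n : ℕ) :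
    #(reflectCodes (2 * n + 1)) + (2 * n ^ 2 + 7 * n + 10) = 10 * 2 ^ n := by
  rw [card_reflectCodes, show 2 * n + 1 + 1 = 2 * (n + 1) by ring,
    show 2 * n + 1 + 2 = 2 * (n + 1) + 1 by ring, halfSum_two_mul_add_one]
  have := halfSum_two_mul (n + 1)
  have := Nat.lt_two_pow_self (n := n + 1)
  have : (n + 1) ^ 2 = n ^ 2 + 2 * n + 1 := by ring
  omega

lemma card_ddpCodes (m : ℕ) : #(ddpCodes m) + m + 1 = 2 ^ (m + 1) + #(reflectCodes m) := by
  have := card_shiftCodes m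
  rw [ddpCodes, card_insertNone, card_disjSum]
  omega

/-- Orders of the semigroups of order-decreasing partial isometries of odd and
even chains. -/
theorem ddp_order (n : ℕ) :
    Nat.card {α : ℕ → Option ℕ // PIso (2 * n + 1) α ∧ PDecr α} =
      2 ^ (2 * n + 2) + 5 * 2 ^ (n + 1) - (2 * n ^ 2 + 9 * n + 12) ∧
    Nat.card {α : ℕ → Option ℕ // PIso (2 * n) α ∧ PDecr α} =
      2 ^ (2 * n + 1) + 7 * 2 ^ n - (2 * n ^ 2 + 7 * n + 8) := by
  rw [card_ddp_eq_card_ddpCodes, card_ddp_eq_card_ddpCodes]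
  have := card_ddpCodes (2 * n + 1)
  have := card_ddpCodes (2 * n)
  have := card_reflectCodes_two_mul_add_one n
  have := card_reflectCodes_two_mul n
  have : 2 ^ (2 * n + 2) = 2 * 2 ^ (2 * n + 1) := by ring
  omega
end

section
/- The number of order-decreasing partial isometries of {1,...,n} with exactly one fixed point equals 2^{a+1} − 2 if n = 2a, and 3·2^{a−1} − 2 if n = 2a−1. -/
namespace DDPAux

def F (m : ℕ) (S : Finset ℕ) : ℕ → Option ℕ :=
  fun x => if x = m ∨ x ∈ S then some (2 * m - x) else none

def Cond (n m : ℕ) (S : Finset ℕ) : Prop :=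
  1 ≤ m ∧ m ≤ n ∧ S ⊆ Finset.Ioc m (min (2 * m - 1) n)

def Idx (n : ℕ) : Finset ((_ : ℕ) × Finset ℕ) :=
  (Finset.Icc 1 n).sigma fun m => (Finset.Ioc m (min (2 * m - 1) n)).powerset

lemma mem_Idx {n m : ℕ} {S : Finset ℕ} :
    (⟨m, S⟩ : (_ : ℕ) × Finset ℕ) ∈ Idx n ↔ Cond n m S := by
  simp [Idx, Cond, Finset.mem_sigma, Finset.mem_Icc, Finset.mem_powerset, and_assoc,
    Finset.subset_iff]

lemma dom_bounds {n m : ℕ} {S : Finset ℕ} (h : Cond n m S) {x : ℕ} (hx : x = m ∨ x ∈ S) :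
    m ≤ x ∧ x ≤ 2 * m - 1 ∧ 1 ≤ x ∧ x ≤ n := by
  obtain ⟨h1, h2, h3⟩ := h
  rcases hx with rfl | hx
  · omega
  · have := h3 hx
    rw [Finset.mem_Ioc] at this
    omega

lemma F_eq_some {m : ℕ} {S : Finset ℕ} {x b : ℕ} (h : F m S x = some b) :
    (x = m ∨ x ∈ S) ∧ b = 2 * m - x := by
  unfold F at h
  split at h
  · exact ⟨‹_›, (Option.some_inj.mp h).symm⟩
  · simp at h

lemma good {n m : ℕ} {S : Finset ℕ} (h : Cond n m S) :
    PIso n (F m S) ∧ PDecr (F m S) ∧ PFix (F m S) = {m} := by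
  refine ⟨⟨?_, ?_, ?_, ?_⟩, ?_, ?_⟩
  · intro x hx
    unfold F at hx
    split at hx
    · have := dom_bounds h ‹_›
      rw [Set.mem_Icc]; omega
    · exact absurd rfl hx
  · intro x b hx
    obtain ⟨hd, rfl⟩ := F_eq_some hx
    have := dom_bounds h hd
    rw [Set.mem_Icc]
    omega
  · intro x y c hx hy
    obtain ⟨hdx, hcx⟩ := F_eq_some hx
    obtain ⟨hdy, hcy⟩ := F_eq_some hy
    have h1 := dom_bounds h hdx
    have h2 := dom_bounds h hdy
    omega
  · intro x y c d hx hy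
    obtain ⟨hdx, hcx⟩ := F_eq_some hx
    obtain ⟨hdy, hcy⟩ := F_eq_some hy
    have h1 := dom_bounds h hdx
    have h2 := dom_bounds h hdy
    rw [Int.natAbs_eq_natAbs_iff]
    right
    omega
  · intro x b hx
    obtain ⟨hd, rfl⟩ := F_eq_some hx
    have := dom_bounds h hd
    omega
  · ext x
    simp only [PFix, Set.mem_setOf_eq, Set.mem_singleton_iff]
    constructor
    · intro hx
      obtain ⟨hd, he⟩ := F_eq_some hx
      have := dom_bounds h hd
      omega
    · rintro rfl
      unfold F
      rw [if_pos (Or.inl rfl)]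
      congr 1
      omega

lemma classify {n : ℕ} {α : ℕ → Option ℕ} (h1 : PIso n α) (h2 : PDecr α)
    (h3 : (PFix α).ncard = 1) : ∃ m S, Cond n m S ∧ α = F m S := by
  classical
  obtain ⟨m, hm⟩ := Set.ncard_eq_one.mp h3
  have hmm : α m = some m := by
    have : m ∈ PFix α := by rw [hm]; rfl
    exact this
  have huniq : ∀ x, α x = some x → x = m := by
    intro x hx
    have : x ∈ PFix α := hx
    rw [hm] at this
    exact this
  obtain ⟨hd, hi, hinj, hiso⟩ := h1
  have hm1 : 1 ≤ m ∧ m ≤ n := by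
    have := hd m (by rw [hmm]; simp)
    rw [Set.mem_Icc] at this; exact this
  have key : ∀ x b, α x = some b → b = 2 * m - x ∧ m ≤ x ∧ x ≤ 2 * m - 1 := by
    intro x b hx
    have hb := Set.mem_Icc.mp (hi x b hx)
    have hxn := Set.mem_Icc.mp (hd x (by rw [hx]; simp))
    have hdec := h2 x b hx
    have hia := hiso x m b m hx hmm
    rw [Int.natAbs_eq_natAbs_iff] at hia
    rcases hia with hcase | hcase
    · have hbx : b = x := by omega
      subst hbx
      have hxm : b = m := huniq b hx
      omega
    · omega
  refine ⟨m, (Finset.Icc 1 n).filter (fun x => α x ≠ none ∧ x ≠ m), ⟨hm1.1, hm1.2, ?_⟩, ?_⟩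
  · intro x hx
    rw [Finset.mem_filter, Finset.mem_Icc] at hx
    obtain ⟨⟨hx1, hx2⟩, hne, hxm⟩ := hx
    obtain ⟨b, hb⟩ := Option.ne_none_iff_exists'.mp hne
    have := key x b hb
    rw [Finset.mem_Ioc]
    omega
  · funext x
    by_cases hxm : x = m
    · subst hxm
      unfold F
      rw [if_pos (Or.inl rfl), hmm]
      congr 1
      omega
    · cases hax : α x with
      | none =>
        unfold F
        rw [if_neg]
        rintro (rfl | hS)
        · exact hxm rfl
        · rw [Finset.mem_filter] at hS
          exact hS.2.1 hax
      | some b =>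
        have hk := key x b hax
        have hxn := Set.mem_Icc.mp (hd x (by rw [hax]; simp))
        have hxS : x ∈ (Finset.Icc 1 n).filter (fun x => α x ≠ none ∧ x ≠ m) := by
          rw [Finset.mem_filter, Finset.mem_Icc]
          exact ⟨hxn, by rw [hax]; simp, hxm⟩
        unfold F
        rw [if_pos (Or.inr hxS), Option.some_inj]
        omega

lemma F_inj {n : ℕ} : Set.InjOn (fun p : (_ : ℕ) × Finset ℕ => F p.1 p.2) (Idx n) := by
  rintro ⟨m, S⟩ hp ⟨m', S'⟩ hq hF
  simp only at hF
  have hc := mem_Idx.mp hp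
  have hc' := mem_Idx.mp hq
  have g1 := (good (n := n) hc).2.2
  have g2 := (good (n := n) hc').2.2
  have hmm' : m = m' := by
    have : ({m} : Set ℕ) = {m'} := by rw [← g1, ← g2, hF]
    simpa using this
  subst hmm'
  have hmem : ∀ (T T' : Finset ℕ), T ⊆ Finset.Ioc m (min (2 * m - 1) n) →
      F m T = F m T' → ∀ x ∈ T, x ∈ T' := by
    intro T T' hsub hFe x hx
    have hx1 : F m T x = some (2 * m - x) := by
      unfold F; rw [if_pos (Or.inr hx)]
    rw [hFe] at hx1
    obtain ⟨hd, _⟩ := F_eq_some hx1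
    rcases hd with rfl | hmem
    · exfalso
      have := hsub hx
      rw [Finset.mem_Ioc] at this
      omega
    · exact hmem
  have : S = S' := by
    ext x
    exact ⟨hmem S S' hc.2.2 hF x, hmem S' S hc'.2.2 hF.symm x⟩
  subst this
  rfl

lemma main (n : ℕ) :
    Nat.card {α : ℕ → Option ℕ // PIso n α ∧ PDecr α ∧ (PFix α).ncard = 1}
      = ∑ m ∈ Finset.Icc 1 n, 2 ^ (min (2 * m - 1) n - m) := by
  classical
  have hset : {α : ℕ → Option ℕ | PIso n α ∧ PDecr α ∧ (PFix α).ncard = 1}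
      = ↑((Idx n).image fun p => F p.1 p.2) := by
    ext α
    simp only [Set.mem_setOf_eq, Finset.coe_image, Set.mem_image, Finset.mem_coe]
    constructor
    · rintro ⟨h1, h2, h3⟩
      obtain ⟨m, S, hcnd, rfl⟩ := classify h1 h2 h3
      exact ⟨⟨m, S⟩, mem_Idx.mpr hcnd, rfl⟩
    · rintro ⟨⟨m, S⟩, hmem, rfl⟩
      obtain ⟨g1, g2, g3⟩ := good (mem_Idx.mp hmem)
      exact ⟨g1, g2, by rw [g3]; exact Set.ncard_singleton m⟩
  have h1 : Nat.card {α : ℕ → Option ℕ // PIso n α ∧ PDecr α ∧ (PFix α).ncard = 1}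
      = ({α : ℕ → Option ℕ | PIso n α ∧ PDecr α ∧ (PFix α).ncard = 1}).ncard :=
    (Nat.card_coe_set_eq _).symm
  rw [h1, hset, Set.ncard_coe_finset, Finset.card_image_of_injOn F_inj, Idx,
    Finset.card_sigma]
  refine Finset.sum_congr rfl fun m _ => ?_
  rw [Finset.card_powerset, Nat.card_Ioc]

lemma sum_pow (k : ℕ) : ∑ i ∈ Finset.range k, 2 ^ i = 2 ^ k - 1 := by
  induction k with
  | zero => simp
  | succ k ih =>
    rw [Finset.sum_range_succ, ih]
    have : 1 ≤ 2 ^ k := Nat.one_le_two_pow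
    ring_nf
    omega

end DDPAux

lemma even_sum (a : ℕ) (ha : 1 ≤ a) :
    ∑ m ∈ Finset.Icc 1 (2 * a), 2 ^ (min (2 * m - 1) (2 * a) - m) = 2 ^ (a + 1) - 2 := by
  rw [show Finset.Icc 1 _ = Finset.Ico 1 _ from (Finset.Ico_add_one_right_eq_Icc 1 _).symm, Finset.sum_Ico_eq_sum_range]
  have h2a : 2 * a + 1 - 1 = a + a := by omega
  rw [h2a, Finset.sum_range_add]
  have e1 : ∑ i ∈ Finset.range a, 2 ^ (min (2 * (1 + i) - 1) (2 * a) - (1 + i))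
      = ∑ i ∈ Finset.range a, 2 ^ i := by
    refine Finset.sum_congr rfl fun i hi => ?_
    rw [Finset.mem_range] at hi
    congr 1
    omega
  have e2 : ∑ i ∈ Finset.range a, 2 ^ (min (2 * (1 + (a + i)) - 1) (2 * a) - (1 + (a + i)))
      = ∑ i ∈ Finset.range a, 2 ^ (a - 1 - i) := by
    refine Finset.sum_congr rfl fun i hi => ?_
    rw [Finset.mem_range] at hi
    congr 1
    omega
  rw [e1, e2, Finset.sum_range_reflect (fun j => 2 ^ j) a, DDPAux.sum_pow]
  have : 1 ≤ 2 ^ a := Nat.one_le_two_pow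
  rw [pow_succ]
  omega

lemma odd_sum (a : ℕ) (ha : 1 ≤ a) :
    ∑ m ∈ Finset.Icc 1 (2 * a - 1), 2 ^ (min (2 * m - 1) (2 * a - 1) - m)
      = 3 * 2 ^ (a - 1) - 2 := by
  obtain ⟨b, rfl⟩ : ∃ b, a = b + 1 := ⟨a - 1, by omega⟩
  rw [show Finset.Icc 1 _ = Finset.Ico 1 _ from (Finset.Ico_add_one_right_eq_Icc 1 _).symm, Finset.sum_Ico_eq_sum_range]
  have h2a : 2 * (b + 1) - 1 + 1 - 1 = (b + 1) + b := by omega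
  rw [h2a, Finset.sum_range_add]
  have e1 : ∑ i ∈ Finset.range (b + 1),
        2 ^ (min (2 * (1 + i) - 1) (2 * (b + 1) - 1) - (1 + i))
      = ∑ i ∈ Finset.range (b + 1), 2 ^ i := by
    refine Finset.sum_congr rfl fun i hi => ?_
    rw [Finset.mem_range] at hi
    congr 1
    omega
  have e2 : ∑ i ∈ Finset.range b,
        2 ^ (min (2 * (1 + (b + 1 + i)) - 1) (2 * (b + 1) - 1) - (1 + (b + 1 + i)))
      = ∑ i ∈ Finset.range b, 2 ^ (b - 1 - i) := by
    refine Finset.sum_congr rfl fun i hi => ?_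
    rw [Finset.mem_range] at hi
    congr 1
    omega
  rw [e1, e2, Finset.sum_range_reflect (fun j => 2 ^ j) b, DDPAux.sum_pow, DDPAux.sum_pow]
  have h1 : 1 ≤ 2 ^ b := Nat.one_le_two_pow
  have h2 : (b + 1) - 1 = b := by omega
  rw [h2, pow_succ]
  omega



/-- The number of order-decreasing partial isometries of {1,…,n} with exactly one
fixed point: 2^(a+1) − 2 when n = 2a and 3·2^(a−1) − 2 when n = 2a − 1. -/
theorem ddp_one_fixed_count (a : ℕ) (ha : 1 ≤ a) :
    Nat.card {α : ℕ → Option ℕ //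
      PIso (2 * a) α ∧ PDecr α ∧ (PFix α).ncard = 1} = 2 ^ (a + 1) - 2 ∧
    Nat.card {α : ℕ → Option ℕ //
      PIso (2 * a - 1) α ∧ PDecr α ∧ (PFix α).ncard = 1} = 3 * 2 ^ (a - 1) - 2 := by
  constructor
  · rw [DDPAux.main]
    exact even_sum a ha
  · rw [DDPAux.main]
    exact odd_sum a ha
end
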